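/- arXiv:2103.07952 — 12 statements merged into one kernel-verified Lean document; each statement's English description precedes it below -/
import Mathlib

section
/- If 4R·ω_g·T̃_m ≥ −V², then the set I_f is nonempty. -/
open Real

/-
The map `Λ` has the form `Λ(i) = b·i − a/i` with `b > 0` and `a·b = R·ω_g·T̃_m / V²`, so
`Λ(i) = 1` amounts to the quadratic `b·i² − i − a = 0`. Its discriminant `1 + 4ab` is
nonnegative exactly under the hypothesis, and then `(1 + √(1 + 4ab)) / (2b)` is a positive root.
-/

lemma exists_pos_mul_sub_div_eq_one {a b : ℝ} (hb : 0 < b) (hdisc : 0 ≤ 1 + 4 * (a * b)) :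
    ∃ x > 0, b * x - a / x = 1 := by
  set d := √(1 + 4 * (a * b))
  have hd : d ^ 2 = 1 + 4 * (a * b) := sq_sqrt hdisc
  have hd₁ : 0 < 1 + d := by positivity
  refine ⟨(1 + d) / (2 * b), by positivity, ?_⟩
  field_simp
  linear_combination hd

theorem stmt_1_general
    (R L m V ωg : ℝ)
    (hR : 0 < R) (hL : 0 < L) (hm : 0 < m)
    (hV : 0 < V) (hωg : 0 < ωg)
    (Tt p : ℝ)
    (hp : p = R / L)
    (Λ : ℝ → ℝ)
    (hΛ : ∀ i : ℝ, i ≠ 0 →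
      Λ i = -(Tt / (m * i)) * (L * Real.sqrt (p ^ 2 + ωg ^ 2) / V)
            + m * i * ωg * p / (V * Real.sqrt (p ^ 2 + ωg ^ 2)))
    (If : Set ℝ) (hIf : If = {i : ℝ | 0 < i ∧ |Λ i| ≤ 1})
    (hmain : 4 * R * ωg * Tt ≥ -V ^ 2) :
    If.Nonempty := by
  subst hp hIf
  set s := √((R / L) ^ 2 + ωg ^ 2)
  have hs : 0 < s := sqrt_pos.mpr (by positivity)
  set a := Tt * L * s / (m * V)
  set b := m * ωg * (R / L) / (V * s)
  have hb : 0 < b := by positivity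
  have hΛ_eq : ∀ i ≠ 0, Λ i = b * i - a / i := fun i hi => by
    rw [hΛ i hi]
    simp only [a, b]
    field_simp
    ring
  have hab : a * b = R * ωg * Tt / V ^ 2 := by
    simp only [a, b]
    field_simp
  have hdisc : 0 ≤ 1 + 4 * (a * b) := by
    rw [hab, show 1 + 4 * (R * ωg * Tt / V ^ 2) = (V ^ 2 + 4 * R * ωg * Tt) / V ^ 2 by
      field_simp]
    exact div_nonneg (by linarith) (by positivity)
  obtain ⟨i, hi, hΛi⟩ := exists_pos_mul_sub_div_eq_one hb hdisc
  exact ⟨i, hi, by rw [hΛ_eq i hi.ne', hΛi, abs_one]⟩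

/-- If `4·R·ωg·T̃m ≥ −V²`, then the set `I_f` is nonempty. -/
theorem stmt_1
    (R L J m Dp V ωg ωn Tm : ℝ)
    (hR : 0 < R) (hL : 0 < L) (hJ : 0 < J) (hm : 0 < m) (hDp : 0 < Dp)
    (hV : 0 < V) (hωg : 0 < ωg) (hωn : 0 < ωn)
    (Tt p : ℝ)
    (hTt : Tt = Tm + Dp * (ωn - ωg)) (hp : p = R / L)
    (Λ : ℝ → ℝ)
    (hΛ : ∀ i : ℝ, i ≠ 0 →
      Λ i = -(Tt / (m * i)) * (L * Real.sqrt (p ^ 2 + ωg ^ 2) / V)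
            + m * i * ωg * p / (V * Real.sqrt (p ^ 2 + ωg ^ 2)))
    (If : Set ℝ) (hIf : If = {i : ℝ | 0 < i ∧ |Λ i| ≤ 1})
    (hmain : 4 * R * ωg * Tt ≥ -V ^ 2) :
    If.Nonempty :=
  stmt_1_general R L m V ωg hR hL hm hV hωg Tt p hp Λ hΛ If hIf hmain
end

section
/- If T̃_m ≠ 0 and I_f is nonempty, then I_f is a nonempty closed bounded interval, i.e., I_f = [inf I_f, sup I_f]. If T̃_m = 0, then I_f is the half-open interval (0, V·√(p² + ω_g²)/(m·ω_g·p)]. -/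
open Real Set

/-! Writing `Λ i = A / i + B i` with `B > 0`, the condition `|Λ i| ≤ 1` for `i > 0` reads
`|A + B i²| ≤ i`, i.e. `B i² - i + A ≤ 0` and `B i² + i + A ≥ 0`. The first condition cuts out a
bounded interval (sublevel set of a convex quadratic), and on `i > 0` the second one defines an
upper set because `B i² + i` increases there; so `I_f` is order-connected and bounded. When
`A ≠ 0`, i.e. `T̃_m ≠ 0`, the point `i = 0` violates `|A + B i²| ≤ i`, so `I_f` is closed and hence
equals `[inf I_f, sup I_f]`. When `A = 0` the condition is just `0 < B i ≤ 1`. -/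

def admissibleSet (A B : ℝ) : Set ℝ := {i | 0 < i ∧ |A / i + B * i| ≤ 1}

theorem mem_admissibleSet_iff {A B i : ℝ} :
    i ∈ admissibleSet A B ↔ 0 < i ∧ |A + B * i ^ 2| ≤ i := by
  refine and_congr_right fun hi => ?_
  rw [show A / i + B * i = (A + B * i ^ 2) / i by field_simp, abs_div, abs_of_pos hi,
    div_le_one hi]

theorem ordConnected_setOf_quadratic_nonpos {a b c : ℝ} (ha : 0 ≤ a) :
    {x : ℝ | a * x ^ 2 + b * x + c ≤ 0}.OrdConnected := by
  refine ⟨fun x hx y hy z ⟨hxz, hzy⟩ => ?_⟩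
  rcases hxz.eq_or_lt with rfl | hxz'
  · exact hx
  -- with `q t = a t² + b t + c`: `(y - x) q z = (y - z) q x + (z - x) q y - a (z - x) (y - z) (y - x)`
  have hscaled : (y - x) * (a * z ^ 2 + b * z + c) ≤ 0 := by
    nlinarith [mul_nonneg (sub_nonneg.2 hzy) (neg_nonneg.2 hx.out),
      mul_nonneg (sub_nonneg.2 hxz) (neg_nonneg.2 hy.out),
      mul_nonneg (mul_nonneg (mul_nonneg ha (sub_nonneg.2 hxz)) (sub_nonneg.2 hzy))
        (sub_nonneg.2 (hxz.trans hzy))]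
  exact nonpos_of_mul_nonpos_right hscaled (by linarith)

theorem admissibleSet_eq_inter (A B : ℝ) :
    admissibleSet A B =
      {x | B * x ^ 2 + (-1) * x + A ≤ 0} ∩ {x | 0 < x ∧ 0 ≤ B * x ^ 2 + x + A} := by
  ext x
  simp only [mem_admissibleSet_iff, abs_le, mem_inter_iff, mem_ofPred_eq]
  constructor
  · rintro ⟨hx, h₁, h₂⟩
    exact ⟨by linarith, hx, by linarith⟩
  · rintro ⟨h₂, hx, h₁⟩
    exact ⟨hx, by linarith, by linarith⟩

theorem admissibleSet_ordConnected (A : ℝ) {B : ℝ} (hB : 0 < B) :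
    (admissibleSet A B).OrdConnected := by
  rw [admissibleSet_eq_inter]
  refine (ordConnected_setOf_quadratic_nonpos hB.le).inter ⟨fun x hx y _ z ⟨hxz, _⟩ => ?_⟩
  exact ⟨hx.1.trans_le hxz, by nlinarith [hx.2, mul_le_mul hxz hxz hx.1.le (hx.1.le.trans hxz)]⟩

theorem admissibleSet_bddAbove (A : ℝ) {B : ℝ} (hB : 0 < B) : BddAbove (admissibleSet A B) := by
  refine ⟨1 + (1 + |A|) / B, fun x hx => ?_⟩
  obtain ⟨hx, habs⟩ := mem_admissibleSet_iff.1 hx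
  have hq : B * x ^ 2 ≤ x + |A| := by linarith [(abs_le.1 habs).2, neg_abs_le A]
  rcases le_or_gt x 1 with h | h
  · have : 0 ≤ (1 + |A|) / B := by positivity
    linarith
  · have : x * B ≤ 1 + |A| := by nlinarith [abs_nonneg A]
    linarith [(le_div_iff₀ hB).2 this]

theorem isClosed_admissibleSet {A : ℝ} (hA : A ≠ 0) (B : ℝ) : IsClosed (admissibleSet A B) := by
  have heq : admissibleSet A B = {x | |A + B * x ^ 2| ≤ x} := by
    ext x
    rw [mem_admissibleSet_iff, mem_ofPred_eq, and_iff_right_iff_imp]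
    intro h
    refine ((abs_nonneg _).trans h).lt_of_ne ?_
    rintro rfl
    exact hA (by simpa using h)
  rw [heq]
  exact isClosed_le (by fun_prop) continuous_id

theorem admissibleSet_eq_Icc {A B : ℝ} (hA : A ≠ 0) (hB : 0 < B)
    (hne : (admissibleSet A B).Nonempty) :
    admissibleSet A B = Icc (sInf (admissibleSet A B)) (sSup (admissibleSet A B)) :=
  eq_Icc_csInf_csSup_of_connected_bdd_closed
    ⟨hne, (admissibleSet_ordConnected A hB).isPreconnected⟩ ⟨0, fun _ hi => hi.1.le⟩
    (admissibleSet_bddAbove A hB) (isClosed_admissibleSet hA B)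

theorem admissibleSet_zero {B : ℝ} (hB : 0 < B) : admissibleSet 0 B = Ioc 0 B⁻¹ := by
  ext i
  simp only [admissibleSet, mem_ofPred_eq, mem_Ioc, zero_div, zero_add]
  refine and_congr_right fun hi => ?_
  rw [abs_of_pos (mul_pos hB hi), ← one_div, le_div_iff₀ hB, mul_comm]

theorem stmt_2_general
    (R L m V ωg : ℝ)
    (hR : 0 < R) (hL : 0 < L) (hm : 0 < m)
    (hV : 0 < V) (hωg : 0 < ωg)
    (Tt p : ℝ)
    (hp : p = R / L)
    (Λ : ℝ → ℝ)
    (hΛ : ∀ i : ℝ, i ≠ 0 →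
      Λ i = -(Tt / (m * i)) * (L * Real.sqrt (p ^ 2 + ωg ^ 2) / V)
            + m * i * ωg * p / (V * Real.sqrt (p ^ 2 + ωg ^ 2)))
    (If : Set ℝ) (hIf : If = {i : ℝ | 0 < i ∧ |Λ i| ≤ 1}) :
    (Tt ≠ 0 → If.Nonempty → If = Set.Icc (sInf If) (sSup If)) ∧
    (Tt = 0 → If = Set.Ioc 0 (V * Real.sqrt (p ^ 2 + ωg ^ 2) / (m * ωg * p))) := by
  set s := √(p ^ 2 + ωg ^ 2)
  have hp_pos : 0 < p := hp ▸ div_pos hR hL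
  have hs : 0 < s := Real.sqrt_pos.2 (by positivity)
  have hIf_eq : If = admissibleSet (-(Tt * L * s) / (m * V)) (m * ωg * p / (V * s)) := by
    rw [hIf]
    refine Set.ext fun i => and_congr_right fun hi => ?_
    rw [hΛ i hi.ne']
    congr! 2
    field_simp
  refine ⟨fun hT hne => ?_, fun hT => ?_⟩
  · subst hIf_eq
    exact admissibleSet_eq_Icc (by simp [hT, hL.ne', hs.ne', hm.ne', hV.ne']) (by positivity) hne
  · rw [hIf_eq, hT, zero_mul, zero_mul, neg_zero, zero_div, admissibleSet_zero (by positivity),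
      inv_div]

/-- If `T̃m ≠ 0` and `I_f` is nonempty, then `I_f` is a nonempty closed bounded
interval, i.e. `I_f = [inf I_f, sup I_f]`. If `T̃m = 0`, then
`I_f = (0, V·√(p² + ωg²)/(m·ωg·p)]`. -/
theorem stmt_2
    (R L J m Dp V ωg ωn Tm : ℝ)
    (hR : 0 < R) (hL : 0 < L) (hJ : 0 < J) (hm : 0 < m) (hDp : 0 < Dp)
    (hV : 0 < V) (hωg : 0 < ωg) (hωn : 0 < ωn)
    (Tt p : ℝ)
    (hTt : Tt = Tm + Dp * (ωn - ωg)) (hp : p = R / L)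
    (Λ : ℝ → ℝ)
    (hΛ : ∀ i : ℝ, i ≠ 0 →
      Λ i = -(Tt / (m * i)) * (L * Real.sqrt (p ^ 2 + ωg ^ 2) / V)
            + m * i * ωg * p / (V * Real.sqrt (p ^ 2 + ωg ^ 2)))
    (If : Set ℝ) (hIf : If = {i : ℝ | 0 < i ∧ |Λ i| ≤ 1}) :
    (Tt ≠ 0 → If.Nonempty → If = Set.Icc (sInf If) (sSup If)) ∧
    (Tt = 0 → If = Set.Ioc 0 (V * Real.sqrt (p ^ 2 + ωg ^ 2) / (m * ωg * p))) :=
  stmt_2_general R L m V ωg hR hL hm hV hωg Tt p hp Λ hΛ If hIf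
end

section
/- Assume T̃_m > 0. Then Λ is strictly increasing on (0, ∞), the image {Λ(i_f) : i_f ∈ I_f} equals [−1, 1], and for every Λ₀ ∈ [−1, 1] the unique i_f > 0 with Λ(i_f) = Λ₀ is i_f = √(p² + ω_g²)·(Λ₀·V + √(Λ₀²·V² + 4·ω_g·R·T̃_m))/(2·m·ω_g·p). -/
/-!
On `(0, ∞)` the function `Λ` has the shape `i ↦ -a / i + b * i` with `a, b > 0`, hence is strictly
increasing, and `Λ i = c` is the quadratic `b i² - c i - a = 0`, whose unique positive root is
`(c + √(c² + 4ab)) / (2b)`. Every `c ∈ ℝ` is therefore attained exactly once, which gives both the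
image of `I_f` and the closed form of the inverse.
-/

open Set

noncomputable def posRoot (a b c : ℝ) : ℝ := (c + √(c ^ 2 + 4 * a * b)) / (2 * b)

section NegDivAddMul

variable {a b : ℝ}

theorem strictMonoOn_neg_div_add_mul (ha : 0 ≤ a) (hb : 0 < b) :
    StrictMonoOn (fun x => -(a / x) + b * x) (Ioi 0) := by
  intro x hx y hy hxy
  have hdiv : a / y ≤ a / x := div_le_div_of_nonneg_left ha hx hxy.le
  have hmul : b * x < b * y := mul_lt_mul_of_pos_left hxy hb
  dsimp only
  linarith

theorem posRoot_pos (ha : 0 < a) (hb : 0 < b) (c : ℝ) : 0 < posRoot a b c := by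
  have hsqrt : |c| < √(c ^ 2 + 4 * a * b) := by
    rw [← Real.sqrt_sq_eq_abs]
    exact Real.sqrt_lt_sqrt (sq_nonneg c) (by nlinarith [mul_pos ha hb])
  have hnum : 0 < c + √(c ^ 2 + 4 * a * b) := by linarith [neg_abs_le c]
  exact div_pos hnum (by positivity)

theorem neg_div_add_mul_posRoot (ha : 0 < a) (hb : 0 < b) (c : ℝ) :
    -(a / posRoot a b c) + b * posRoot a b c = c := by
  have hsq : √(c ^ 2 + 4 * a * b) ^ 2 = c ^ 2 + 4 * a * b :=
    Real.sq_sqrt (by nlinarith [mul_pos ha hb])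
  have hquad : b * posRoot a b c ^ 2 - c * posRoot a b c - a = 0 := by
    unfold posRoot
    generalize √(c ^ 2 + 4 * a * b) = d at hsq ⊢
    field_simp
    linear_combination hsq
  have hroot := (posRoot_pos ha hb c).ne'
  field_simp
  linear_combination hquad

theorem neg_div_add_mul_eq_iff (ha : 0 < a) (hb : 0 < b) {x : ℝ} (hx : 0 < x) (c : ℝ) :
    -(a / x) + b * x = c ↔ x = posRoot a b c := by
  constructor
  · intro hxc
    refine (strictMonoOn_neg_div_add_mul ha.le hb).injOn hx (posRoot_pos ha hb c) ?_
    simp only [hxc, neg_div_add_mul_posRoot ha hb]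
  · rintro rfl
    exact neg_div_add_mul_posRoot ha hb c

theorem image_Ioi_neg_div_add_mul (ha : 0 < a) (hb : 0 < b) :
    (fun x => -(a / x) + b * x) '' Ioi 0 = univ :=
  eq_univ_of_forall fun c => ⟨posRoot a b c, posRoot_pos ha hb c, neg_div_add_mul_posRoot ha hb c⟩

end NegDivAddMul

theorem stmt_3_general
    (R L m V ωg : ℝ)
    (hR : 0 < R) (hL : 0 < L) (hm : 0 < m)
    (hV : 0 < V) (hωg : 0 < ωg)
    (Tt p : ℝ)
    (hp : p = R / L)
    (Λ : ℝ → ℝ)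
    (hΛ : ∀ i : ℝ, i ≠ 0 →
      Λ i = -(Tt / (m * i)) * (L * Real.sqrt (p ^ 2 + ωg ^ 2) / V)
            + m * i * ωg * p / (V * Real.sqrt (p ^ 2 + ωg ^ 2)))
    (If : Set ℝ) (hIf : If = {i : ℝ | 0 < i ∧ |Λ i| ≤ 1})
    (hTtpos : 0 < Tt) :
    StrictMonoOn Λ (Set.Ioi 0) ∧
    Λ '' If = Set.Icc (-1) 1 ∧
    (∀ Λ0 ∈ Set.Icc (-1 : ℝ) 1,
      0 < Real.sqrt (p ^ 2 + ωg ^ 2) *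
            (Λ0 * V + Real.sqrt (Λ0 ^ 2 * V ^ 2 + 4 * ωg * R * Tt)) / (2 * m * ωg * p) ∧
      Λ (Real.sqrt (p ^ 2 + ωg ^ 2) *
            (Λ0 * V + Real.sqrt (Λ0 ^ 2 * V ^ 2 + 4 * ωg * R * Tt)) / (2 * m * ωg * p)) = Λ0 ∧
      ∀ i : ℝ, 0 < i → Λ i = Λ0 →
        i = Real.sqrt (p ^ 2 + ωg ^ 2) *
              (Λ0 * V + Real.sqrt (Λ0 ^ 2 * V ^ 2 + 4 * ωg * R * Tt)) / (2 * m * ωg * p)) := by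
  have hp0 : 0 < p := hp ▸ div_pos hR hL
  set s := √(p ^ 2 + ωg ^ 2)
  have hs : 0 < s := Real.sqrt_pos.mpr (by positivity)
  set a := Tt * L * s / (m * V)
  set b := m * ωg * p / (V * s)
  have ha : 0 < a := by positivity
  have hb : 0 < b := by positivity
  have hΛab : EqOn Λ (fun x => -(a / x) + b * x) (Ioi 0) := fun i hi => by
    rw [hΛ i (ne_of_gt hi)]
    simp only [a, b]
    field_simp
  have hformula (c : ℝ) :
      s * (c * V + √(c ^ 2 * V ^ 2 + 4 * ωg * R * Tt)) / (2 * m * ωg * p) = posRoot a b c := by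
    have hR' : R = L * p := by rw [hp]; field_simp
    have hab : a * b * V ^ 2 = ωg * R * Tt := by
      simp only [a, b, hR']; field_simp
    have hdisc : c ^ 2 * V ^ 2 + 4 * ωg * R * Tt = V ^ 2 * (c ^ 2 + 4 * a * b) := by
      linear_combination (-4) * hab
    rw [hdisc, Real.sqrt_mul (sq_nonneg V), Real.sqrt_sq hV.le, posRoot]
    simp only [b]
    field_simp
  refine ⟨(strictMonoOn_neg_div_add_mul ha.le hb).congr hΛab.symm, ?_, fun c _ => ?_⟩
  · have hIf' : If = Ioi 0 ∩ Λ ⁻¹' Icc (-1) 1 := by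
      rw [hIf]; ext i; simp [abs_le]
    rw [hIf', image_inter_preimage, hΛab.image_eq, image_Ioi_neg_div_add_mul ha hb, univ_inter]
  · rw [hformula c]
    have hroot := posRoot_pos ha hb c
    refine ⟨hroot, (hΛab hroot).trans (neg_div_add_mul_posRoot ha hb c), fun i hi hΛi => ?_⟩
    exact (neg_div_add_mul_eq_iff ha hb hi c).mp ((hΛab hi).symm.trans hΛi)

/-- If `T̃m > 0` then `Λ` is strictly increasing on `(0,∞)`, the image of `I_f`
under `Λ` is `[−1,1]`, and for every `Λ₀ ∈ [−1,1]` the unique `i_f > 0` with `Λ(i_f) = Λ₀` is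
`i_f = √(p²+ωg²)·(Λ₀·V + √(Λ₀²·V² + 4·ωg·R·T̃m))/(2·m·ωg·p)`. -/
theorem stmt_3
    (R L J m Dp V ωg ωn Tm : ℝ)
    (hR : 0 < R) (hL : 0 < L) (hJ : 0 < J) (hm : 0 < m) (hDp : 0 < Dp)
    (hV : 0 < V) (hωg : 0 < ωg) (hωn : 0 < ωn)
    (Tt p : ℝ)
    (hTt : Tt = Tm + Dp * (ωn - ωg)) (hp : p = R / L)
    (Λ : ℝ → ℝ)
    (hΛ : ∀ i : ℝ, i ≠ 0 →
      Λ i = -(Tt / (m * i)) * (L * Real.sqrt (p ^ 2 + ωg ^ 2) / V)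
            + m * i * ωg * p / (V * Real.sqrt (p ^ 2 + ωg ^ 2)))
    (If : Set ℝ) (hIf : If = {i : ℝ | 0 < i ∧ |Λ i| ≤ 1})
    (hTtpos : 0 < Tt) :
    StrictMonoOn Λ (Set.Ioi 0) ∧
    Λ '' If = Set.Icc (-1) 1 ∧
    (∀ Λ0 ∈ Set.Icc (-1 : ℝ) 1,
      0 < Real.sqrt (p ^ 2 + ωg ^ 2) *
            (Λ0 * V + Real.sqrt (Λ0 ^ 2 * V ^ 2 + 4 * ωg * R * Tt)) / (2 * m * ωg * p) ∧
      Λ (Real.sqrt (p ^ 2 + ωg ^ 2) *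
            (Λ0 * V + Real.sqrt (Λ0 ^ 2 * V ^ 2 + 4 * ωg * R * Tt)) / (2 * m * ωg * p)) = Λ0 ∧
      ∀ i : ℝ, 0 < i → Λ i = Λ0 →
        i = Real.sqrt (p ^ 2 + ωg ^ 2) *
              (Λ0 * V + Real.sqrt (Λ0 ^ 2 * V ^ 2 + 4 * ωg * R * Tt)) / (2 * m * ωg * p)) :=
  stmt_3_general R L m V ωg hR hL hm hV hωg Tt p hp Λ hΛ If hIf hTtpos
end

section
/- Assume T̃_m < 0. Then Λ(i_f) > 0 for all i_f > 0; there exists i* > 0 such that Λ is strictly decreasing on (0, i*] and strictly increasing on [i*, ∞); the image {Λ(i_f) : i_f ∈ I_f} is contained in (0, 1]; and for every Λ₀ ∈ {Λ(i_f) : i_f ∈ I_f} one has Λ₀²·V² + 4·ω_g·R·T̃_m ≥ 0 and both numbers √(p² + ω_g²)·(Λ₀·V + √(Λ₀²·V² + 4·ω_g·R·T̃_m))/(2·m·ω_g·p) and √(p² + ω_g²)·(Λ₀·V − √(Λ₀²·V² + 4·ω_g·R·T̃_m))/(2·m·ω_g·p) are positive and satisfy Λ(i_f) = Λ₀. -/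
open Real

/-!
With `A = -T̃ₘ L √(p² + ω_g²) / (m V)` and `B = m ω_g p / (V √(p² + ω_g²))`, both positive when
`T̃ₘ < 0`, one has `Λ(i) = A / i + B i`. Such a function decreases strictly up to `√(A / B)` and
increases strictly after it. `Λ(i) = Λ₀` is the quadratic `B i² − Λ₀ i + A = 0`, whose discriminant
`Λ₀² − 4AB = (A / i − B i)²` is nonnegative on the range of `Λ`; since `A B V² = −ω_g R T̃ₘ`,
its two roots are the two displayed numbers, both positive because `AB > 0`.
-/

section DivAddMul

variable {a b : ℝ}

lemma div_add_mul_sub_div_add_mul {x y : ℝ} (hx : x ≠ 0) (hy : y ≠ 0) :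
    a / x + b * x - (a / y + b * y) = (x - y) * (b * (x * y) - a) / (x * y) := by
  field_simp
  ring

lemma mul_mul_self_sqrt_div (ha : 0 ≤ a) (hb : 0 < b) : b * (√(a / b) * √(a / b)) = a := by
  rw [mul_self_sqrt (div_nonneg ha hb.le)]
  field_simp

lemma strictAntiOn_div_add_mul (ha : 0 < a) (hb : 0 < b) :
    StrictAntiOn (fun x => a / x + b * x) (Set.Ioc 0 √(a / b)) := by
  rintro x ⟨hx, -⟩ y ⟨hy, hy_le⟩ hxy
  have hprod : b * (x * y) < a := by
    calc b * (x * y) < b * (√(a / b) * √(a / b)) := mul_lt_mul_of_pos_left (by nlinarith) hb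
      _ = a := mul_mul_self_sqrt_div ha.le hb
  rw [← sub_pos, div_add_mul_sub_div_add_mul hx.ne' hy.ne']
  exact div_pos (mul_pos_of_neg_of_neg (by linarith) (by linarith)) (by positivity)

lemma strictMonoOn_div_add_mul (ha : 0 < a) (hb : 0 < b) :
    StrictMonoOn (fun x => a / x + b * x) (Set.Ici √(a / b)) := by
  intro x (hx : √(a / b) ≤ x) y _ hxy
  have hx0 : 0 < x := (sqrt_pos.2 (div_pos ha hb)).trans_le hx
  have hprod : a < b * (y * x) := by
    calc a = b * (√(a / b) * √(a / b)) := (mul_mul_self_sqrt_div ha.le hb).symm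
      _ < b * (y * x) := mul_lt_mul_of_pos_left (by nlinarith [sqrt_nonneg (a / b)]) hb
  rw [← sub_pos, div_add_mul_sub_div_add_mul (hx0.trans hxy).ne' hx0.ne']
  exact div_pos (mul_pos (by linarith) (by linarith)) (by nlinarith)

lemma four_mul_mul_le_sq_div_add_mul {x : ℝ} (hx : x ≠ 0) :
    4 * a * b ≤ (a / x + b * x) ^ 2 := by
  have : (a / x + b * x) ^ 2 - 4 * a * b = (a / x - b * x) ^ 2 := by
    field_simp
    ring
  nlinarith [sq_nonneg (a / x - b * x)]

lemma pos_and_div_add_mul_eq_of_sq_eq {c d : ℝ} (ha : 0 < a) (hb : 0 < b) (hc : 0 < c)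
    (hd : d ^ 2 = c ^ 2 - 4 * a * b) :
    0 < (c + d) / (2 * b) ∧ a / ((c + d) / (2 * b)) + b * ((c + d) / (2 * b)) = c := by
  have hdc : |d| < c := abs_lt_of_sq_lt_sq (by nlinarith [mul_pos ha hb]) hc.le
  have hcd : 0 < c + d := by linarith [neg_abs_le d]
  refine ⟨by positivity, ?_⟩
  field_simp
  linear_combination hd

end DivAddMul

theorem stmt_4_general
    (R L m V ωg : ℝ)
    (hR : 0 < R) (hL : 0 < L) (hm : 0 < m)
    (hV : 0 < V) (hωg : 0 < ωg)
    (Tt p : ℝ)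
    (hp : p = R / L)
    (Λ : ℝ → ℝ)
    (hΛ : ∀ i : ℝ, i ≠ 0 →
      Λ i = -(Tt / (m * i)) * (L * Real.sqrt (p ^ 2 + ωg ^ 2) / V)
            + m * i * ωg * p / (V * Real.sqrt (p ^ 2 + ωg ^ 2)))
    (If : Set ℝ) (hIf : If = {i : ℝ | 0 < i ∧ |Λ i| ≤ 1})
    (hTtneg : Tt < 0) :
    (∀ i : ℝ, 0 < i → 0 < Λ i) ∧
    (∃ istar : ℝ, 0 < istar ∧
      StrictAntiOn Λ (Set.Ioc 0 istar) ∧ StrictMonoOn Λ (Set.Ici istar)) ∧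
    Λ '' If ⊆ Set.Ioc 0 1 ∧
    (∀ Λ0 ∈ Λ '' If,
      0 ≤ Λ0 ^ 2 * V ^ 2 + 4 * ωg * R * Tt ∧
      (0 < Real.sqrt (p ^ 2 + ωg ^ 2) *
            (Λ0 * V + Real.sqrt (Λ0 ^ 2 * V ^ 2 + 4 * ωg * R * Tt)) / (2 * m * ωg * p) ∧
       Λ (Real.sqrt (p ^ 2 + ωg ^ 2) *
            (Λ0 * V + Real.sqrt (Λ0 ^ 2 * V ^ 2 + 4 * ωg * R * Tt)) / (2 * m * ωg * p)) = Λ0) ∧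
      (0 < Real.sqrt (p ^ 2 + ωg ^ 2) *
            (Λ0 * V - Real.sqrt (Λ0 ^ 2 * V ^ 2 + 4 * ωg * R * Tt)) / (2 * m * ωg * p) ∧
       Λ (Real.sqrt (p ^ 2 + ωg ^ 2) *
            (Λ0 * V - Real.sqrt (Λ0 ^ 2 * V ^ 2 + 4 * ωg * R * Tt)) / (2 * m * ωg * p)) = Λ0)) := by
  have hp0 : 0 < p := hp ▸ div_pos hR hL
  set s := √(p ^ 2 + ωg ^ 2)
  have hs0 : 0 < s := by positivity
  have hTt : 0 < -Tt := by linarith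
  set A := -Tt * L * s / (m * V) with hA_def
  set B := m * ωg * p / (V * s) with hB_def
  have hA : 0 < A := by positivity
  have hB : 0 < B := by positivity
  have hΛ_eq : Set.EqOn (fun x => A / x + B * x) Λ (Set.Ioi 0) := fun i hi => by
    rw [hΛ i (ne_of_gt hi), hA_def, hB_def]
    field_simp
  have hΛ_pos : ∀ i, 0 < i → 0 < Λ i := fun i hi => hΛ_eq hi ▸ by positivity
  have hAB : A * B * V ^ 2 = -(ωg * R * Tt) := by
    rw [hA_def, hB_def, hp]
    field_simp
  refine ⟨hΛ_pos, ⟨√(A / B), by positivity,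
    (strictAntiOn_div_add_mul hA hB).congr (hΛ_eq.mono Set.Ioc_subset_Ioi_self),
    (strictMonoOn_div_add_mul hA hB).congr (hΛ_eq.mono (Set.Ici_subset_Ioi.2 (by positivity)))⟩,
    ?_, ?_⟩
  · rintro _ ⟨i, hi, rfl⟩
    rw [hIf] at hi
    exact ⟨hΛ_pos i hi.1, (abs_le.1 hi.2).2⟩
  rintro _ ⟨i, hi, rfl⟩
  rw [hIf] at hi
  have hdisc : Λ i ^ 2 * V ^ 2 + 4 * ωg * R * Tt = (Λ i ^ 2 - 4 * A * B) * V ^ 2 := by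
    linear_combination 4 * hAB
  have hdisc_nonneg : 0 ≤ Λ i ^ 2 - 4 * A * B :=
    sub_nonneg.2 ((hΛ_eq hi.1) ▸ four_mul_mul_le_sq_div_add_mul hi.1.ne')
  set D := √(Λ i ^ 2 * V ^ 2 + 4 * ωg * R * Tt)
  have hD : (D / V) ^ 2 = Λ i ^ 2 - 4 * A * B := by
    rw [div_pow, sq_sqrt (hdisc ▸ by positivity), hdisc]
    field_simp
  have hroot : ∀ d, d ^ 2 = Λ i ^ 2 - 4 * A * B →
      0 < (Λ i + d) / (2 * B) ∧ Λ ((Λ i + d) / (2 * B)) = Λ i := fun d hd =>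
    let ⟨hpos, heq⟩ := pos_and_div_add_mul_eq_of_sq_eq hA hB (hΛ_pos i hi.1) hd
    ⟨hpos, (hΛ_eq hpos).symm.trans heq⟩
  have hplus : s * (Λ i * V + D) / (2 * m * ωg * p) = (Λ i + D / V) / (2 * B) := by
    rw [hB_def]
    field_simp
  have hminus : s * (Λ i * V - D) / (2 * m * ωg * p) = (Λ i + -(D / V)) / (2 * B) := by
    rw [hB_def]
    field_simp
    ring
  rw [hplus, hminus]
  exact ⟨hdisc ▸ by positivity, hroot _ hD, hroot _ (by rw [neg_sq, hD])⟩

/-- If `T̃m < 0` then `Λ(i_f) > 0` for all `i_f > 0`; there is `i* > 0` such that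
`Λ` is strictly decreasing on `(0, i*]` and strictly increasing on `[i*, ∞)`; the image
`Λ '' I_f ⊆ (0,1]`; and for every `Λ₀` in this image, `Λ₀²·V² + 4·ωg·R·T̃m ≥ 0` and both
`√(p²+ωg²)·(Λ₀·V ± √(Λ₀²·V² + 4·ωg·R·T̃m))/(2·m·ωg·p)` are positive and are mapped by `Λ`
to `Λ₀`. -/
theorem stmt_4
    (R L J m Dp V ωg ωn Tm : ℝ)
    (hR : 0 < R) (hL : 0 < L) (hJ : 0 < J) (hm : 0 < m) (hDp : 0 < Dp)
    (hV : 0 < V) (hωg : 0 < ωg) (hωn : 0 < ωn)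
    (Tt p : ℝ)
    (hTt : Tt = Tm + Dp * (ωn - ωg)) (hp : p = R / L)
    (Λ : ℝ → ℝ)
    (hΛ : ∀ i : ℝ, i ≠ 0 →
      Λ i = -(Tt / (m * i)) * (L * Real.sqrt (p ^ 2 + ωg ^ 2) / V)
            + m * i * ωg * p / (V * Real.sqrt (p ^ 2 + ωg ^ 2)))
    (If : Set ℝ) (hIf : If = {i : ℝ | 0 < i ∧ |Λ i| ≤ 1})
    (hTtneg : Tt < 0) :
    (∀ i : ℝ, 0 < i → 0 < Λ i) ∧
    (∃ istar : ℝ, 0 < istar ∧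
      StrictAntiOn Λ (Set.Ioc 0 istar) ∧ StrictMonoOn Λ (Set.Ici istar)) ∧
    Λ '' If ⊆ Set.Ioc 0 1 ∧
    (∀ Λ0 ∈ Λ '' If,
      0 ≤ Λ0 ^ 2 * V ^ 2 + 4 * ωg * R * Tt ∧
      (0 < Real.sqrt (p ^ 2 + ωg ^ 2) *
            (Λ0 * V + Real.sqrt (Λ0 ^ 2 * V ^ 2 + 4 * ωg * R * Tt)) / (2 * m * ωg * p) ∧
       Λ (Real.sqrt (p ^ 2 + ωg ^ 2) *
            (Λ0 * V + Real.sqrt (Λ0 ^ 2 * V ^ 2 + 4 * ωg * R * Tt)) / (2 * m * ωg * p)) = Λ0) ∧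
      (0 < Real.sqrt (p ^ 2 + ωg ^ 2) *
            (Λ0 * V - Real.sqrt (Λ0 ^ 2 * V ^ 2 + 4 * ωg * R * Tt)) / (2 * m * ωg * p) ∧
       Λ (Real.sqrt (p ^ 2 + ωg ^ 2) *
            (Λ0 * V - Real.sqrt (Λ0 ^ 2 * V ^ 2 + 4 * ωg * R * Tt)) / (2 * m * ωg * p)) = Λ0)) :=
  stmt_4_general R L m V ωg hR hL hm hV hωg Tt p hp Λ hΛ If hIf hTtneg
end

section
/- Assume 4R·ω_g·T̃_m ≥ −V² and let i_f ∈ I_f. For each j ∈ {1,2}, the determinant of the Jacobian matrix A_j of the vector field F at the equilibrium point x_jᵉ is strictly positive if and only if sin(δ_jᵉ + φ) > 0. -/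
/-!
The Jacobian of the synchronverter field has last row `(0, 0, 1, 0)`; expanding along it gives
`det A = m i_f V / (J L²) · (R sin δ + ω L cos δ)`, independently of the currents.
Since `tan φ = ω_g L / R` with `cos φ > 0`, at `ω = ω_g` the bracket is
`(R / cos φ) · sin (δ + φ)`.
-/

open Real

theorem Matrix.eq_of_hasFDerivAt_mulVecLin {𝕜 n : Type*} [NontriviallyNormedField 𝕜]
    [CompleteSpace 𝕜] [Fintype n] [DecidableEq n] {f : (n → 𝕜) → n → 𝕜} {x : n → 𝕜}
    {A B : Matrix n n 𝕜}
    (hA : HasFDerivAt f (LinearMap.toContinuousLinearMap A.mulVecLin) x)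
    (hB : HasFDerivAt f (LinearMap.toContinuousLinearMap B.mulVecLin) x) : A = B := by
  have h := LinearMap.toContinuousLinearMap.injective (hA.unique hB)
  rw [← Matrix.toLin'_apply', ← Matrix.toLin'_apply'] at h
  exact Matrix.toLin'.injective h

theorem mul_sin_add_of_tan_eq {a b φ : ℝ} (δ : ℝ) (ha : a ≠ 0) (hcos : cos φ ≠ 0)
    (htan : tan φ = b / a) : a * sin (δ + φ) = cos φ * (a * sin δ + b * cos δ) := by
  rw [tan_eq_sin_div_cos, div_eq_div_iff hcos ha] at htan
  rw [sin_add]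
  linear_combination cos δ * htan

noncomputable section Synchronverter

variable (R L J m Dp V ωg ωn Tm i_f : ℝ)

def synchronverterField (x : Fin 4 → ℝ) : Fin 4 → ℝ :=
  ![(-R * x 0 + x 2 * L * x 1 + V * sin (x 3)) / L,
    (-(x 2 * L * x 0) - R * x 1 - m * i_f * x 2 + V * cos (x 3)) / L,
    (Tm + m * i_f * x 1 - Dp * x 2 + Dp * ωn) / J,
    x 2 - ωg]

def synchronverterJacobian (x : Fin 4 → ℝ) : Matrix (Fin 4) (Fin 4) ℝ :=
  !![-R / L, x 2, x 1, V * cos (x 3) / L;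
     -x 2, -R / L, -x 0 - m * i_f / L, -(V * sin (x 3)) / L;
     0, m * i_f / J, -Dp / J, 0;
     0, 0, 1, 0]

variable {R L J m Dp V ωg ωn Tm i_f}

theorem hasFDerivAt_synchronverterField (hL : L ≠ 0) (x : Fin 4 → ℝ) :
    HasFDerivAt (synchronverterField R L J m Dp V ωg ωn Tm i_f)
      (LinearMap.toContinuousLinearMap
        (synchronverterJacobian R L J m Dp V i_f x).mulVecLin) x := by
  have hx (k : Fin 4) : HasFDerivAt (fun y : Fin 4 → ℝ => y k) (ContinuousLinearMap.proj k) x :=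
    hasFDerivAt_apply (𝕜 := ℝ) k x
  have hsin := (hasDerivAt_sin (x 3)).comp_hasFDerivAt x (hx 3)
  have hcos := (hasDerivAt_cos (x 3)).comp_hasFDerivAt x (hx 3)
  apply hasFDerivAt_pi''
  intro i
  fin_cases i
  · convert ((((hx 0).const_mul (-R)).add (((hx 2).mul_const L).mul (hx 1))).add
      (hsin.const_mul V)).mul_const L⁻¹ using 1 <;> ext <;>
      simp [synchronverterField, synchronverterJacobian, dotProduct,
        Fin.sum_univ_four] <;> field_simp
    ring
  · convert (((((((hx 2).mul_const L).mul (hx 0)).neg).sub ((hx 1).const_mul R)).sub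
      ((hx 2).const_mul (m * i_f))).add (hcos.const_mul V)).mul_const L⁻¹ using 1 <;> ext <;>
      simp [synchronverterField, synchronverterJacobian, dotProduct,
        Fin.sum_univ_four] <;> field_simp
    ring
  · convert ((((hasFDerivAt_const Tm x).add ((hx 1).const_mul (m * i_f))).sub
      ((hx 2).const_mul Dp)).add (hasFDerivAt_const (Dp * ωn) x)).mul_const J⁻¹ using 1 <;>
      ext <;>
      simp [synchronverterField, synchronverterJacobian, dotProduct,
        Fin.sum_univ_four] <;> field_simp
    ring
  · convert (hx 2).sub_const ωg using 1 <;> ext <;>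
      simp [synchronverterField, synchronverterJacobian, dotProduct,
        Fin.sum_univ_four]

theorem det_synchronverterJacobian (hL : L ≠ 0) (x : Fin 4 → ℝ) :
    (synchronverterJacobian R L J m Dp V i_f x).det =
      m * i_f * V / (J * L ^ 2) * (R * sin (x 3) + x 2 * L * cos (x 3)) := by
  rw [Matrix.det_succ_row _ 3]
  simp [synchronverterJacobian, Fin.sum_univ_succ, Matrix.det_fin_three, Fin.succAbove,
    Matrix.submatrix]
  field_simp
  ring

end Synchronverter

theorem stmt_5_general
    (R L J m Dp V ωg ωn Tm : ℝ)
    (hR : 0 < R) (hL : 0 < L) (hJ : 0 < J) (hm : 0 < m)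
    (hV : 0 < V)
    (Tt p φ : ℝ)
    (hφ : φ ∈ Set.Ioo 0 (π / 2)) (hφtan : Real.tan φ = ωg * L / R)
    (Λ : ℝ → ℝ)
    (If : Set ℝ) (hIf : If = {i : ℝ | 0 < i ∧ |Λ i| ≤ 1})
    (i_f : ℝ) (hif : i_f ∈ If)
    (δ1 δ2 iqe : ℝ)
    (F : (Fin 4 → ℝ) → Fin 4 → ℝ)
    (hF : ∀ x : Fin 4 → ℝ, F x =
      ![(-R * x 0 + x 2 * L * x 1 + V * Real.sin (x 3)) / L,
        (-(x 2 * L * x 0) - R * x 1 - m * i_f * x 2 + V * Real.cos (x 3)) / L,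
        (Tm + m * i_f * x 1 - Dp * x 2 + Dp * ωn) / J,
        x 2 - ωg]) :
    ∀ δe ∈ ({δ1, δ2} : Set ℝ), ∀ A : Matrix (Fin 4) (Fin 4) ℝ,
      HasFDerivAt F (LinearMap.toContinuousLinearMap (Matrix.mulVecLin A))
        ![-(Tt * ωg / (m * i_f * p)) + V * Real.sin δe / R, iqe, ωg, δe] →
      (0 < A.det ↔ 0 < Real.sin (δe + φ)) := by
  intro δe _ A hA
  have hif_pos : 0 < i_f := by
    rw [hIf] at hif
    exact hif.1
  have hA_eq : A = synchronverterJacobian R L J m Dp V i_f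
      ![-(Tt * ωg / (m * i_f * p)) + V * sin δe / R, iqe, ωg, δe] := by
    rw [show F = synchronverterField R L J m Dp V ωg ωn Tm i_f from funext hF] at hA
    exact Matrix.eq_of_hasFDerivAt_mulVecLin hA (hasFDerivAt_synchronverterField hL.ne' _)
  have hcos_φ : 0 < cos φ := cos_pos_of_mem_Ioo ⟨by linarith [hφ.1, pi_pos], hφ.2⟩
  have hsin_add := mul_sin_add_of_tan_eq δe hR.ne' hcos_φ.ne' hφtan
  rw [hA_eq, det_synchronverterJacobian hL.ne', mul_pos_iff_of_pos_left (by positivity)]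
  simp only [Matrix.cons_val_two, Matrix.cons_val_three, Matrix.tail_cons, Matrix.head_cons]
  rw [← mul_pos_iff_of_pos_left hcos_φ, ← hsin_add, mul_pos_iff_of_pos_left hR]

/-- Assume `4R·ωg·T̃m ≥ −V²` and let `i_f ∈ I_f`. For each `j ∈ {1,2}`, the
determinant of the Jacobian matrix `A_j` of the vector field `F` at the equilibrium point
`x_jᵉ` is strictly positive if and only if `sin(δ_jᵉ + φ) > 0`. -/
theorem stmt_5
    (R L J m Dp V ωg ωn Tm : ℝ)
    (hR : 0 < R) (hL : 0 < L) (hJ : 0 < J) (hm : 0 < m) (hDp : 0 < Dp)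
    (hV : 0 < V) (hωg : 0 < ωg) (hωn : 0 < ωn)
    (Tt p φ : ℝ)
    (hTt : Tt = Tm + Dp * (ωn - ωg)) (hp : p = R / L)
    (hφ : φ ∈ Set.Ioo 0 (π / 2)) (hφtan : Real.tan φ = ωg * L / R)
    (Λ : ℝ → ℝ)
    (hΛ : ∀ i : ℝ, i ≠ 0 →
      Λ i = -(Tt / (m * i)) * (L * Real.sqrt (p ^ 2 + ωg ^ 2) / V)
            + m * i * ωg * p / (V * Real.sqrt (p ^ 2 + ωg ^ 2)))
    (If : Set ℝ) (hIf : If = {i : ℝ | 0 < i ∧ |Λ i| ≤ 1})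
    (hmain : 4 * R * ωg * Tt ≥ -V ^ 2)
    (i_f : ℝ) (hif : i_f ∈ If)
    (δ1 δ2 iqe : ℝ)
    (hδ1 : δ1 = Real.arccos (Λ i_f) - φ)
    (hδ2 : δ2 = -Real.arccos (Λ i_f) - φ)
    (hiqe : iqe = -(Tt / (m * i_f)))
    (F : (Fin 4 → ℝ) → Fin 4 → ℝ)
    (hF : ∀ x : Fin 4 → ℝ, F x =
      ![(-R * x 0 + x 2 * L * x 1 + V * Real.sin (x 3)) / L,
        (-(x 2 * L * x 0) - R * x 1 - m * i_f * x 2 + V * Real.cos (x 3)) / L,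
        (Tm + m * i_f * x 1 - Dp * x 2 + Dp * ωn) / J,
        x 2 - ωg]) :
    ∀ δe ∈ ({δ1, δ2} : Set ℝ), ∀ A : Matrix (Fin 4) (Fin 4) ℝ,
      HasFDerivAt F (LinearMap.toContinuousLinearMap (Matrix.mulVecLin A))
        ![-(Tt * ωg / (m * i_f * p)) + V * Real.sin δe / R, iqe, ωg, δe] →
      (0 < A.det ↔ 0 < Real.sin (δe + φ)) :=
  stmt_5_general R L J m Dp V ωg ωn Tm hR hL hJ hm hV Tt p φ hφ hφtan Λ If hIf i_f hif δ1 δ2 iqe F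
    hF
end

section
/- At every equilibrium point of the fourth-order model (for any fixed i_f ∈ ℝ), the active and reactive powers P and Q satisfy T̃_m·ω_g = P + R·(P² + Q²)/V². -/
/-!
At an equilibrium the stator equations give `V sin δ` and `V cos δ` in terms of the currents, so
the active power is `-m i_f ω i_q` minus the copper loss `R (i_d² + i_q²)`. The swing equation
at `ω = ω_g` turns `-m i_f ω i_q` into `T̃_m ω_g`, and since `(P, Q)` is the current vector
rotated by `δ` and scaled by `V`, the copper loss is `R (P² + Q²) / V²`.
-/

open Real

theorem active_sq_add_reactive_sq (V a b δ : ℝ) :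
    (-V * (a * sin δ + b * cos δ)) ^ 2 + (V * (b * sin δ - a * cos δ)) ^ 2
      = V ^ 2 * (a ^ 2 + b ^ 2) := by
  linear_combination V ^ 2 * (a ^ 2 + b ^ 2) * sin_sq_add_cos_sq δ

theorem active_power_eq_of_stator_equilibrium {R L V m i_f i_d i_q ω δ : ℝ}
    (he1 : -R * i_d + ω * L * i_q + V * sin δ = 0)
    (he2 : -(ω * L * i_d) - R * i_q - m * i_f * ω + V * cos δ = 0) :
    -V * (i_d * sin δ + i_q * cos δ) = -(m * i_f * ω * i_q) - R * (i_d ^ 2 + i_q ^ 2) := by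
  linear_combination (-i_d) * he1 - i_q * he2

theorem stmt_7_general
    (R L m Dp V ωg ωn Tm : ℝ)
    (hV : 0 < V)
    (Tt : ℝ) (hTt : Tt = Tm + Dp * (ωn - ωg))
    (i_f i_d i_q ω δ : ℝ)
    (he1 : -R * i_d + ω * L * i_q + V * Real.sin δ = 0)
    (he2 : -(ω * L * i_d) - R * i_q - m * i_f * ω + V * Real.cos δ = 0)
    (he3 : Tm + m * i_f * i_q - Dp * ω + Dp * ωn = 0)
    (he4 : ω - ωg = 0)
    (P Q : ℝ)
    (hP : P = -V * (i_d * Real.sin δ + i_q * Real.cos δ))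
    (hQ : Q = V * (i_q * Real.sin δ - i_d * Real.cos δ)) :
    Tt * ωg = P + R * (P ^ 2 + Q ^ 2) / V ^ 2 := by
  have hω : ω = ωg := sub_eq_zero.mp he4
  subst hP hQ hTt hω
  rw [active_sq_add_reactive_sq, active_power_eq_of_stator_equilibrium he1 he2, mul_div_assoc,
    mul_div_cancel_left₀ _ (pow_ne_zero 2 hV.ne')]
  linear_combination ω * he3

/-- At every equilibrium point of the fourth-order model (for any fixed `i_f`),
the active and reactive powers `P`, `Q` satisfy `T̃m·ωg = P + R·(P² + Q²)/V²`. -/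
theorem stmt_7
    (R L J m Dp V ωg ωn Tm : ℝ)
    (hR : 0 < R) (hL : 0 < L) (hJ : 0 < J) (hm : 0 < m) (hDp : 0 < Dp)
    (hV : 0 < V) (hωg : 0 < ωg) (hωn : 0 < ωn)
    (Tt : ℝ) (hTt : Tt = Tm + Dp * (ωn - ωg))
    (i_f i_d i_q ω δ : ℝ)
    (he1 : -R * i_d + ω * L * i_q + V * Real.sin δ = 0)
    (he2 : -(ω * L * i_d) - R * i_q - m * i_f * ω + V * Real.cos δ = 0)
    (he3 : Tm + m * i_f * i_q - Dp * ω + Dp * ωn = 0)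
    (he4 : ω - ωg = 0)
    (P Q : ℝ)
    (hP : P = -V * (i_d * Real.sin δ + i_q * Real.cos δ))
    (hQ : Q = V * (i_q * Real.sin δ - i_d * Real.cos δ)) :
    Tt * ωg = P + R * (P ^ 2 + Q ^ 2) / V ^ 2 :=
  stmt_7_general R L m Dp V ωg ωn Tm hV Tt hTt i_f i_d i_q ω δ he1 he2 he3 he4 P Q hP hQ
end

section
/- At every equilibrium point (i_d, i_q, ω, δ) of the fourth-order model (for any fixed i_f ∈ ℝ), the identities m·i_f·ω_g·cos δ = R·P/V + ω_g·L·Q/V + V and m·i_f·ω_g·sin δ = ω_g·L·P/V − R·Q/V hold, where P and Q are the active and reactive powers at the equilibrium. In particular, if R·P + ω_g·L·Q + V² ≠ 0 then tan δ = (ω_g·L·P − R·Q)/(R·P + ω_g·L·Q + V²). -/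
open Real

section EquilibriumPower

variable {R L m V ω i_f i_d i_q δ P Q : ℝ}

/-- Projecting the two electrical equilibrium equations onto `(cos δ, sin δ)` and its rotation
turns the currents into the powers `P`, `Q`; `sin² δ + cos² δ = 1` produces the term `V²`. -/
theorem mul_cos_eq_of_equilibrium
    (he1 : -R * i_d + ω * L * i_q + V * sin δ = 0)
    (he2 : -(ω * L * i_d) - R * i_q - m * i_f * ω + V * cos δ = 0)
    (hP : P = -V * (i_d * sin δ + i_q * cos δ))
    (hQ : Q = V * (i_q * sin δ - i_d * cos δ)) :
    V * (m * i_f * ω * cos δ) = R * P + ω * L * Q + V ^ 2 := by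
  subst hP hQ
  linear_combination (-V * sin δ) * he1 + (-V * cos δ) * he2 + V ^ 2 * sin_sq_add_cos_sq δ

theorem mul_sin_eq_of_equilibrium
    (he1 : -R * i_d + ω * L * i_q + V * sin δ = 0)
    (he2 : -(ω * L * i_d) - R * i_q - m * i_f * ω + V * cos δ = 0)
    (hP : P = -V * (i_d * sin δ + i_q * cos δ))
    (hQ : Q = V * (i_q * sin δ - i_d * cos δ)) :
    V * (m * i_f * ω * sin δ) = ω * L * P - R * Q := by
  subst hP hQ
  linear_combination (V * cos δ) * he1 + (-V * sin δ) * he2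

end EquilibriumPower

theorem Real.tan_eq_div_of_mul_cos_of_mul_sin {k x y δ : ℝ}
    (hc : k * cos δ = x) (hs : k * sin δ = y) (hx : x ≠ 0) : tan δ = y / x := by
  have hk : k ≠ 0 := by rintro rfl; exact hx (by rw [← hc, zero_mul])
  rw [tan_eq_sin_div_cos, ← hc, ← hs, mul_div_mul_left _ _ hk]

theorem stmt_8_general
    (R L m V ωg : ℝ)
    (hV : 0 < V)
    (i_f i_d i_q ω δ : ℝ)
    (he1 : -R * i_d + ω * L * i_q + V * Real.sin δ = 0)
    (he2 : -(ω * L * i_d) - R * i_q - m * i_f * ω + V * Real.cos δ = 0)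
    (he4 : ω - ωg = 0)
    (P Q : ℝ)
    (hP : P = -V * (i_d * Real.sin δ + i_q * Real.cos δ))
    (hQ : Q = V * (i_q * Real.sin δ - i_d * Real.cos δ)) :
    m * i_f * ωg * Real.cos δ = R * P / V + ωg * L * Q / V + V ∧
    m * i_f * ωg * Real.sin δ = ωg * L * P / V - R * Q / V ∧
    (R * P + ωg * L * Q + V ^ 2 ≠ 0 →
      Real.tan δ = (ωg * L * P - R * Q) / (R * P + ωg * L * Q + V ^ 2)) := by
  obtain rfl : ω = ωg := sub_eq_zero.mp he4
  have hcos := mul_cos_eq_of_equilibrium he1 he2 hP hQ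
  have hsin := mul_sin_eq_of_equilibrium he1 he2 hP hQ
  refine ⟨?_, ?_, ?_⟩
  · field_simp
    linear_combination hcos
  · field_simp
    linear_combination hsin
  · exact tan_eq_div_of_mul_cos_of_mul_sin (k := V * (m * i_f * ω))
      (by linear_combination hcos) (by linear_combination hsin)

/-- At every equilibrium point of the fourth-order model (for any fixed `i_f`),
`m·i_f·ωg·cos δ = R·P/V + ωg·L·Q/V + V` and `m·i_f·ωg·sin δ = ωg·L·P/V − R·Q/V`; in
particular, if `R·P + ωg·L·Q + V² ≠ 0` then
`tan δ = (ωg·L·P − R·Q)/(R·P + ωg·L·Q + V²)`. -/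
theorem stmt_8
    (R L J m Dp V ωg ωn Tm : ℝ)
    (hR : 0 < R) (hL : 0 < L) (hJ : 0 < J) (hm : 0 < m) (hDp : 0 < Dp)
    (hV : 0 < V) (hωg : 0 < ωg) (hωn : 0 < ωn)
    (Tt : ℝ) (hTt : Tt = Tm + Dp * (ωn - ωg))
    (i_f i_d i_q ω δ : ℝ)
    (he1 : -R * i_d + ω * L * i_q + V * Real.sin δ = 0)
    (he2 : -(ω * L * i_d) - R * i_q - m * i_f * ω + V * Real.cos δ = 0)
    (he3 : Tm + m * i_f * i_q - Dp * ω + Dp * ωn = 0)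
    (he4 : ω - ωg = 0)
    (P Q : ℝ)
    (hP : P = -V * (i_d * Real.sin δ + i_q * Real.cos δ))
    (hQ : Q = V * (i_q * Real.sin δ - i_d * Real.cos δ)) :
    m * i_f * ωg * Real.cos δ = R * P / V + ωg * L * Q / V + V ∧
    m * i_f * ωg * Real.sin δ = ωg * L * P / V - R * Q / V ∧
    (R * P + ωg * L * Q + V ^ 2 ≠ 0 →
      Real.tan δ = (ωg * L * P - R * Q) / (R * P + ωg * L * Q + V ^ 2)) :=
  stmt_8_general R L m V ωg hV i_f i_d i_q ω δ he1 he2 he4 P Q hP hQ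
end

section
/- Let Z = (R, ω_g·L), O = (0,0), M = −(V²/‖Z‖²)·Z, and C = (−V²/(2R), 0) in ℝ². Then ‖C − O‖ = ‖C − M‖ = V²/(2R), and the unsigned angle at vertex M between the points O and C equals φ, as does the unsigned angle at vertex O between the points C and M: ∠(O, M, C) = ∠(C, O, M) = φ. -/
/-! `M` is the image of `-Z` under inversion in the circle of radius `V` about `O`, and `-Z` lies
on the line `x = -R`. Inversion maps that line onto the circle through `O` centred at
`C = (-V²/(2R), 0)`, so `CO = CM` and the triangle `OCM` is isosceles. Its base angle at `O` is
the angle between `(-1, 0)` and `-Z = -(R, ωg L)`, which is `arctan (ωg L / R) = φ`. -/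

open Real

theorem norm_smul_sub_smul_eq_of_inner_eq {E : Type*} [NormedAddCommGroup E]
    [InnerProductSpace ℝ E] {x u : E} {r d : ℝ} (hu : ‖u‖ = 1) (hxu : inner ℝ x u = d)
    (hd : d ≠ 0) :
    ‖(r ^ 2 / ‖x‖ ^ 2) • x - (r ^ 2 / (2 * d)) • u‖ = r ^ 2 / (2 * |d|) := by
  have hx : ‖x‖ ≠ 0 := by
    intro h
    rw [norm_eq_zero.mp h, inner_zero_left] at hxu
    exact hd hxu.symm
  rw [← sq_eq_sq₀ (norm_nonneg _) (by positivity), norm_sub_sq_real, inner_smul_left,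
    inner_smul_right, norm_smul, norm_smul, hxu, hu]
  simp only [Real.norm_eq_abs, conj_trivial, mul_pow, sq_abs, mul_one]
  field_simp
  rw [sq_abs]
  ring

theorem angle_toLp_one_zero_eq_arctan {a b : ℝ} (ha : 0 < a) (hb : 0 ≤ b) :
    InnerProductGeometry.angle (WithLp.toLp 2 ![1, 0] : EuclideanSpace ℝ (Fin 2))
      (WithLp.toLp 2 ![a, b]) = arctan (b / a) := by
  have hcos : cos (arctan (b / a)) = a / √(a ^ 2 + b ^ 2) := by
    rw [cos_arctan, show 1 + (b / a) ^ 2 = (a ^ 2 + b ^ 2) / a ^ 2 by field_simp,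
      sqrt_div' _ (sq_nonneg a), sqrt_sq ha.le, one_div_div]
  have hmem : arctan (b / a) ∈ Set.Icc 0 π :=
    ⟨arctan_nonneg.mpr (by positivity),
      (arctan_lt_pi_div_two _).le.trans (by linarith [pi_pos])⟩
  rw [InnerProductGeometry.angle, ← arccos_cos hmem.1 hmem.2, hcos]
  simp [EuclideanSpace.norm_eq, PiLp.inner_apply, Fin.sum_univ_two]

/-- With `Z = (R, ωg·L)`, `O = (0,0)`, `M = −(V²/‖Z‖²)·Z` and
`C = (−V²/(2R), 0)` in `ℝ²`, we have `‖C − O‖ = ‖C − M‖ = V²/(2R)`, and the unsigned angles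
satisfy `∠(O, M, C) = ∠(C, O, M) = φ`. -/
theorem stmt_10
    (R L V ωg : ℝ)
    (hR : 0 < R) (hL : 0 < L) (hV : 0 < V) (hωg : 0 < ωg)
    (φ : ℝ) (hφ : φ ∈ Set.Ioo 0 (π / 2)) (hφtan : Real.tan φ = ωg * L / R)
    (Z O M C : EuclideanSpace ℝ (Fin 2))
    (hZ : Z = WithLp.toLp 2 ![R, ωg * L])
    (hO : O = WithLp.toLp 2 ![0, 0])
    (hM : M = -(V ^ 2 / ‖Z‖ ^ 2) • Z)
    (hC : C = WithLp.toLp 2 ![-(V ^ 2 / (2 * R)), 0]) :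
    dist C O = V ^ 2 / (2 * R) ∧
    dist C M = V ^ 2 / (2 * R) ∧
    EuclideanGeometry.angle O M C = φ ∧
    EuclideanGeometry.angle C O M = φ := by
  set e : EuclideanSpace ℝ (Fin 2) := WithLp.toLp 2 ![1, 0]
  have he : ‖-e‖ = 1 := by simp [e, EuclideanSpace.norm_eq, Fin.sum_univ_two]
  have hZ0 : -Z ≠ 0 := fun h ↦ by simpa [hZ, hR.ne'] using congrArg (· 0) h
  have hO' : O = 0 := by rw [hO]; ext i; fin_cases i <;> rfl
  have hC' : C = (V ^ 2 / (2 * R)) • -e := by rw [hC]; ext i; fin_cases i <;> simp [e]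
  have hM' : M = (V ^ 2 / ‖-Z‖ ^ 2) • -Z := by rw [hM, norm_neg, neg_smul, smul_neg]
  have hCO : dist C O = V ^ 2 / (2 * R) := by
    rw [hO', dist_zero_right, hC', norm_smul, he, mul_one, Real.norm_of_nonneg (by positivity)]
  have hCM : dist C M = V ^ 2 / (2 * R) := by
    have hZe : inner ℝ (-Z) (-e) = R := by simp [hZ, e, PiLp.inner_apply, Fin.sum_univ_two]
    rw [dist_comm, dist_eq_norm, hM', hC', norm_smul_sub_smul_eq_of_inner_eq he hZe hR.ne',
      abs_of_pos hR]
  have hCOM : EuclideanGeometry.angle C O M = φ := by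
    have hφ' : φ = arctan (ωg * L / R) := by
      rw [← hφtan, arctan_tan (by linarith [hφ.1, pi_pos]) hφ.2]
    rw [EuclideanGeometry.angle, hO', vsub_eq_sub, vsub_eq_sub, sub_zero, sub_zero, hC', hM',
      InnerProductGeometry.angle_smul_left_of_pos _ _ (by positivity),
      InnerProductGeometry.angle_smul_right_of_pos _ _ (by positivity),
      InnerProductGeometry.angle_neg_neg, hZ, angle_toLp_one_zero_eq_arctan hR (by positivity), hφ']
  refine ⟨hCO, hCM, ?_, hCOM⟩
  rw [EuclideanGeometry.angle_comm,
    ← EuclideanGeometry.angle_eq_angle_of_dist_eq (hCO.trans hCM.symm), hCOM]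
end

section
/- Assume 4R·ω_g·T̃_m ≥ −V². For every i_f ∈ I_f and every j ∈ {1,2}: S_j(i_f) − M = (V·m·i_f·ω_g/‖Z‖)·(cos(φ − δ_jᵉ), sin(φ − δ_jᵉ)), where Z = (R, ω_g·L) and M = −(V²/‖Z‖²)·Z; in particular ‖S_j(i_f) − M‖ = V·m·i_f·ω_g/‖Z‖. -/
/-!
At a steady state the stator equations are linear in the current: in complex form
`Z · (i_d + j i_q) = V (sin δ + j cos δ) - j m i_f ω_g` with `Z = R + j ω_g L`, while the power is
`P + j Q = -V · conj(i_d + j i_q) · (sin δ + j cos δ)`. Solving for the current gives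
`S = -V² / conj Z - j V m i_f ω_g (sin δ + j cos δ) / conj Z`, and the first term is `M`; writing
`Z = ‖Z‖ e^{jφ}` the second is `(V m i_f ω_g / ‖Z‖) e^{j(φ - δ)}`. The equilibrium angles `δ₁ᵉ, δ₂ᵉ`
are exactly the solutions of the `i_q`-equation, `cos (δ + φ) = Λ(i_f)`.
-/

open Real

theorem EuclideanSpace.norm_vec₂ (x y : ℝ) : ‖!₂[x, y]‖ = √(x ^ 2 + y ^ 2) := by
  simp [EuclideanSpace.norm_eq, Fin.sum_univ_two]

theorem EuclideanSpace.norm_cos_sin (θ : ℝ) : ‖!₂[cos θ, sin θ]‖ = 1 := by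
  rw [EuclideanSpace.norm_vec₂, cos_sq_add_sin_sq, sqrt_one]

theorem cos_mul_sqrt_and_sin_mul_sqrt_of_tan_eq {φ a b : ℝ} (ha : 0 < a)
    (hφ : φ ∈ Set.Ioo (-(π / 2)) (π / 2)) (h : tan φ = b / a) :
    cos φ * √(a ^ 2 + b ^ 2) = a ∧ sin φ * √(a ^ 2 + b ^ 2) = b := by
  have hφ' : φ = arctan (b / a) := by rw [← h, arctan_tan hφ.1 hφ.2]
  have hsqrt : √(a ^ 2 + b ^ 2) = a * √(1 + (b / a) ^ 2) := by
    rw [← sqrt_sq ha.le, ← sqrt_mul (sq_nonneg a), sqrt_sq ha.le]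
    congr 1
    field_simp
  rw [hφ', cos_arctan, sin_arctan, hsqrt]
  constructor <;> field_simp

theorem mul_sqrt_div_sq_add_sq {x y L : ℝ} (hL : 0 < L) :
    L * √((x / L) ^ 2 + y ^ 2) = √(x ^ 2 + (y * L) ^ 2) := by
  rw [← sqrt_sq hL.le, ← sqrt_mul (sq_nonneg L), sqrt_sq hL.le]
  congr 1
  field_simp

theorem quadrature_balance_of_cos_add_eq {R L V k ωg Tt p δ φ : ℝ} (hR : 0 < R) (hL : 0 < L)
    (hk : k ≠ 0) (hV : V ≠ 0) (hp : p = R / L)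
    (hcos : cos φ * √(R ^ 2 + (ωg * L) ^ 2) = R) (hsin : sin φ * √(R ^ 2 + (ωg * L) ^ 2) = ωg * L)
    (hδ : cos (δ + φ) = -(Tt / k) * (L * √(p ^ 2 + ωg ^ 2) / V)
      + k * ωg * p / (V * √(p ^ 2 + ωg ^ 2))) :
    ωg * L * (-(Tt * ωg / (k * p)) + V * sin δ / R) + R * -(Tt / k) = V * cos δ - k * ωg := by
  subst hp
  set r := √(R ^ 2 + (ωg * L) ^ 2)
  have hr : r ^ 2 = R ^ 2 + (ωg * L) ^ 2 := sq_sqrt (by positivity)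
  have hr0 : 0 < r := by positivity
  have hq : √((R / L) ^ 2 + ωg ^ 2) = r / L := by
    rw [eq_div_iff hL.ne', mul_comm, mul_sqrt_div_sq_add_sq hL]
  have hδ' : cos (δ + φ) * r = R * cos δ - ωg * L * sin δ := by
    rw [cos_add]; linear_combination cos δ * hcos - sin δ * hsin
  rw [hq] at hδ
  rw [hδ] at hδ'
  field_simp at hδ' ⊢
  linear_combination hδ' + Tt * hr

theorem steadyState_power_sub_center {a b V c id iq δ φ : ℝ} (hab : 0 < a ^ 2 + b ^ 2)
    (hcos : cos φ * √(a ^ 2 + b ^ 2) = a) (hsin : sin φ * √(a ^ 2 + b ^ 2) = b)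
    (hd : a * id - b * iq = V * sin δ) (hq : b * id + a * iq = V * cos δ - c) :
    !₂[-V * (id * sin δ + iq * cos δ), V * (iq * sin δ - id * cos δ)]
        - (-(V ^ 2 / ‖!₂[a, b]‖ ^ 2) • !₂[a, b])
      = (V * c / ‖!₂[a, b]‖) • !₂[cos (φ - δ), sin (φ - δ)] := by
  rw [EuclideanSpace.norm_vec₂]
  set r := √(a ^ 2 + b ^ 2)
  have hr : r ^ 2 = a ^ 2 + b ^ 2 := sq_sqrt hab.le
  have hr0 : r ≠ 0 := (sqrt_pos.2 hab).ne'
  have hpyth := sin_sq_add_cos_sq δ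
  have hP : (a ^ 2 + b ^ 2) * (-V * (id * sin δ + iq * cos δ))
      = -a * V ^ 2 + V * c * (a * cos δ + b * sin δ) := by
    linear_combination (-V) * (sin δ * (a * hd + b * hq) + cos δ * (a * hq - b * hd))
      - a * V ^ 2 * hpyth
  have hQ : (a ^ 2 + b ^ 2) * (V * (iq * sin δ - id * cos δ))
      = -b * V ^ 2 + V * c * (b * cos δ - a * sin δ) := by
    linear_combination V * (sin δ * (a * hq - b * hd) - cos δ * (a * hd + b * hq))
      - b * V ^ 2 * hpyth
  have hcos' : cos (φ - δ) * r = a * cos δ + b * sin δ := by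
    rw [cos_sub]; linear_combination cos δ * hcos + sin δ * hsin
  have hsin' : sin (φ - δ) * r = b * cos δ - a * sin δ := by
    rw [sin_sub]; linear_combination cos δ * hsin - sin δ * hcos
  rw [← hr] at hP hQ
  ext i
  fin_cases i <;>
    simp only [Fin.zero_eta, Fin.mk_one, Fin.isValue, neg_mul, neg_smul, sub_neg_eq_add,
      PiLp.add_apply, PiLp.smul_apply, smul_eq_mul, Matrix.cons_val_zero, Matrix.cons_val_one,
      Matrix.cons_val_fin_one] <;>
    field_simp
  · linear_combination hP - V * c * hcos'
  · linear_combination hQ - V * c * hsin'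

theorem stmt_11_general
    (R L m V ωg : ℝ)
    (hR : 0 < R) (hL : 0 < L) (hm : 0 < m)
    (hV : 0 < V) (hωg : 0 < ωg)
    (Tt p φ : ℝ)
    (hp : p = R / L)
    (hφ : φ ∈ Set.Ioo 0 (π / 2)) (hφtan : Real.tan φ = ωg * L / R)
    (Λ : ℝ → ℝ)
    (hΛ : ∀ i : ℝ, i ≠ 0 →
      Λ i = -(Tt / (m * i)) * (L * Real.sqrt (p ^ 2 + ωg ^ 2) / V)
            + m * i * ωg * p / (V * Real.sqrt (p ^ 2 + ωg ^ 2)))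
    (If : Set ℝ) (hIf : If = {i : ℝ | 0 < i ∧ |Λ i| ≤ 1})
    (i_f : ℝ) (hif : i_f ∈ If)
    (δ1 δ2 iqe : ℝ)
    (hδ1 : δ1 = Real.arccos (Λ i_f) - φ)
    (hδ2 : δ2 = -Real.arccos (Λ i_f) - φ)
    (hiqe : iqe = -(Tt / (m * i_f)))
    (ide Pe Qe : ℝ → ℝ)
    (hide : ∀ δe : ℝ, ide δe = -(Tt * ωg / (m * i_f * p)) + V * Real.sin δe / R)
    (hPe : ∀ δe : ℝ, Pe δe = -V * (ide δe * Real.sin δe + iqe * Real.cos δe))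
    (hQe : ∀ δe : ℝ, Qe δe = V * (iqe * Real.sin δe - ide δe * Real.cos δe))
    (Z M : EuclideanSpace ℝ (Fin 2))
    (hZ : Z = ![R, ωg * L])
    (hM : M = -(V ^ 2 / ‖Z‖ ^ 2) • Z)
    (Se W : ℝ → EuclideanSpace ℝ (Fin 2))
    (hSe : ∀ δe : ℝ, Se δe = ![Pe δe, Qe δe])
    (hW : ∀ δe : ℝ, W δe = ![Real.cos (φ - δe), Real.sin (φ - δe)]) :
    ∀ δe ∈ ({δ1, δ2} : Set ℝ),
      Se δe - M = (V * m * i_f * ωg / ‖Z‖) • W δe ∧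
      ‖Se δe - M‖ = V * m * i_f * ωg / ‖Z‖ := by
  obtain ⟨hi, hΛi⟩ : i_f ∈ {i : ℝ | 0 < i ∧ |Λ i| ≤ 1} := hIf ▸ hif
  obtain ⟨hcφ, hsφ⟩ := cos_mul_sqrt_and_sin_mul_sqrt_of_tan_eq hR
    ⟨by linarith [hφ.1, pi_pos], hφ.2⟩ hφtan
  have hZ' : Z = !₂[R, ωg * L] := WithLp.ofLp_injective 2 hZ
  rintro δe hδe
  have hSe' : Se δe = !₂[Pe δe, Qe δe] := WithLp.ofLp_injective 2 (hSe δe)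
  have hW' : W δe = !₂[cos (φ - δe), sin (φ - δe)] := WithLp.ofLp_injective 2 (hW δe)
  have hcos : cos (δe + φ) = Λ i_f := by
    obtain ⟨hΛ₁, hΛ₂⟩ := abs_le.1 hΛi
    rcases hδe with rfl | rfl
    · rw [hδ1, sub_add_cancel, cos_arccos hΛ₁ hΛ₂]
    · rw [hδ2, sub_add_cancel, cos_neg, cos_arccos hΛ₁ hΛ₂]
  have hdirect : R * ide δe - ωg * L * iqe = V * sin δe := by
    rw [hide, hiqe, hp]
    field_simp
    ring
  have hbalance := quadrature_balance_of_cos_add_eq hR hL (by positivity) hV.ne' hp hcφ hsφ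
    (hcos.trans (hΛ i_f hi.ne'))
  rw [← hide, ← hiqe] at hbalance
  have hS : Se δe - M = (V * m * i_f * ωg / ‖Z‖) • W δe := by
    rw [hM, hZ', hSe', hW', hPe, hQe, mul_assoc V m, mul_assoc V]
    exact steadyState_power_sub_center (by positivity) hcφ hsφ hdirect hbalance
  refine ⟨hS, ?_⟩
  rw [hS, norm_smul, hW', EuclideanSpace.norm_cos_sin, mul_one, norm_of_nonneg (by positivity)]

/-- Assume `4R·ωg·T̃m ≥ −V²`. For every `i_f ∈ I_f` and `j ∈ {1,2}`:
`S_j(i_f) − M = (V·m·i_f·ωg/‖Z‖)·(cos(φ − δ_jᵉ), sin(φ − δ_jᵉ))`, where `Z = (R, ωg·L)` and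
`M = −(V²/‖Z‖²)·Z`; in particular `‖S_j(i_f) − M‖ = V·m·i_f·ωg/‖Z‖`. -/
theorem stmt_11
    (R L J m Dp V ωg ωn Tm : ℝ)
    (hR : 0 < R) (hL : 0 < L) (hJ : 0 < J) (hm : 0 < m) (hDp : 0 < Dp)
    (hV : 0 < V) (hωg : 0 < ωg) (hωn : 0 < ωn)
    (Tt p φ : ℝ)
    (hTt : Tt = Tm + Dp * (ωn - ωg)) (hp : p = R / L)
    (hφ : φ ∈ Set.Ioo 0 (π / 2)) (hφtan : Real.tan φ = ωg * L / R)
    (Λ : ℝ → ℝ)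
    (hΛ : ∀ i : ℝ, i ≠ 0 →
      Λ i = -(Tt / (m * i)) * (L * Real.sqrt (p ^ 2 + ωg ^ 2) / V)
            + m * i * ωg * p / (V * Real.sqrt (p ^ 2 + ωg ^ 2)))
    (If : Set ℝ) (hIf : If = {i : ℝ | 0 < i ∧ |Λ i| ≤ 1})
    (hmain : 4 * R * ωg * Tt ≥ -V ^ 2)
    (i_f : ℝ) (hif : i_f ∈ If)
    (δ1 δ2 iqe : ℝ)
    (hδ1 : δ1 = Real.arccos (Λ i_f) - φ)
    (hδ2 : δ2 = -Real.arccos (Λ i_f) - φ)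
    (hiqe : iqe = -(Tt / (m * i_f)))
    (ide Pe Qe : ℝ → ℝ)
    (hide : ∀ δe : ℝ, ide δe = -(Tt * ωg / (m * i_f * p)) + V * Real.sin δe / R)
    (hPe : ∀ δe : ℝ, Pe δe = -V * (ide δe * Real.sin δe + iqe * Real.cos δe))
    (hQe : ∀ δe : ℝ, Qe δe = V * (iqe * Real.sin δe - ide δe * Real.cos δe))
    (Z M : EuclideanSpace ℝ (Fin 2))
    (hZ : Z = ![R, ωg * L])
    (hM : M = -(V ^ 2 / ‖Z‖ ^ 2) • Z)
    (Se W : ℝ → EuclideanSpace ℝ (Fin 2))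
    (hSe : ∀ δe : ℝ, Se δe = ![Pe δe, Qe δe])
    (hW : ∀ δe : ℝ, W δe = ![Real.cos (φ - δe), Real.sin (φ - δe)]) :
    ∀ δe ∈ ({δ1, δ2} : Set ℝ),
      Se δe - M = (V * m * i_f * ωg / ‖Z‖) • W δe ∧
      ‖Se δe - M‖ = V * m * i_f * ωg / ‖Z‖ :=
  stmt_11_general R L m V ωg hR hL hm hV hωg Tt p φ hp hφ hφtan Λ hΛ If hIf i_f hif δ1 δ2 iqe hδ1
    hδ2 hiqe ide Pe Qe hide hPe hQe Z M hZ hM Se W hSe hW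
end

section
/- (i) If the fifth-order non-saturated model has an equilibrium point, then 4R²·Q̃² ≤ V⁴ + 4R·V²·T̃_m·ω_g. (ii) At every equilibrium point (i_d, i_q, ω, δ, i_f) of the fifth-order model: ω = ω_g, −m·i_f·i_q = T̃_m, the reactive power satisfies Q = Q̃, and the active power P satisfies T̃_m·ω_g = P + R·(P² + Q̃²)/V². -/
/-!
At an equilibrium the load angle is constant, so `ω = ω_g`, and the mechanical equation gives the
electrical torque `-m i_f i_q = T̃_m`. The field equation pins the reactive power to `Q̃`.
Pairing the two current equations with `(i_d, i_q)` gives the power balance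
`P = T̃_m ω_g - R |i|²`, and `P² + Q² = V² |i|²`; eliminating `|i|²` yields (ii).
Read as a quadratic equation in `P`, this balance has a real root only if its discriminant is
nonnegative, which is (i).
-/

open Real

namespace Synchronverter

noncomputable def activePower (V i_d i_q δ : ℝ) : ℝ := -V * (i_d * sin δ + i_q * cos δ)

noncomputable def reactivePower (V i_d i_q δ : ℝ) : ℝ := V * (i_q * sin δ - i_d * cos δ)

theorem activePower_sq_add_reactivePower_sq (V i_d i_q δ : ℝ) :
    activePower V i_d i_q δ ^ 2 + reactivePower V i_d i_q δ ^ 2 = V ^ 2 * (i_d ^ 2 + i_q ^ 2) := by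
  unfold activePower reactivePower
  linear_combination V ^ 2 * (i_d ^ 2 + i_q ^ 2) * sin_sq_add_cos_sq δ

theorem activePower_eq_of_current_eqns {R L m V ω i_d i_q δ i_f : ℝ}
    (hd : -R * i_d + ω * L * i_q + V * sin δ = 0)
    (hq : -(ω * L * i_d) - R * i_q - m * i_f * ω + V * cos δ = 0) :
    activePower V i_d i_q δ = -(m * i_f * i_q) * ω - R * (i_d ^ 2 + i_q ^ 2) := by
  unfold activePower
  linear_combination -i_d * hd - i_q * hq

theorem reactivePower_eq_of_field_eqn {V k Q i_d i_q δ : ℝ} (hV : V ≠ 0) (hk : k ≠ 0)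
    (h : k * i_d * cos δ - k * i_q * sin δ + k / V * Q = 0) :
    reactivePower V i_d i_q δ = Q := by
  have h' : k * (V * (i_d * cos δ - i_q * sin δ) + Q) = 0 := by
    field_simp at h
    linear_combination h
  unfold reactivePower
  linear_combination -(mul_eq_zero.mp h').resolve_left hk

theorem eq_add_div_of_power_balance {T ω P Q R V I : ℝ} (hV : V ≠ 0)
    (hP : P = T * ω - R * I) (hPQ : P ^ 2 + Q ^ 2 = V ^ 2 * I) :
    T * ω = P + R * (P ^ 2 + Q ^ 2) / V ^ 2 := by
  rw [hPQ, hP]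
  field_simp
  ring

theorem four_mul_sq_le_of_eq_add_div {a P Q R V : ℝ} (hV : V ≠ 0)
    (h : a = P + R * (P ^ 2 + Q ^ 2) / V ^ 2) :
    4 * R ^ 2 * Q ^ 2 ≤ V ^ 4 + 4 * R * V ^ 2 * a := by
  have hsq : V ^ 4 + 4 * R * V ^ 2 * a - 4 * R ^ 2 * Q ^ 2 = (V ^ 2 + 2 * R * P) ^ 2 := by
    rw [h]
    field_simp
    ring
  nlinarith [sq_nonneg (V ^ 2 + 2 * R * P)]

end Synchronverter

open Synchronverter in
theorem stmt_15_general
    (R L m Dp V ωg ωn K Tm : ℝ)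
    (hV : 0 < V) (hK : 0 < K)
    (Tt Qt k : ℝ)
    (hTt : Tt = Tm + Dp * (ωn - ωg))
    (hk : k = Real.sqrt (3 / 2) * V / K)
    (eqm : ℝ × ℝ × ℝ × ℝ × ℝ → Prop)
    (heqm : ∀ i_d i_q ω δ i_f : ℝ, eqm (i_d, i_q, ω, δ, i_f) ↔
      (-R * i_d + ω * L * i_q + V * Real.sin δ = 0 ∧
       -(ω * L * i_d) - R * i_q - m * i_f * ω + V * Real.cos δ = 0 ∧
       Tm + m * i_f * i_q - Dp * ω + Dp * ωn = 0 ∧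
       ω - ωg = 0 ∧
       k * i_d * Real.cos δ - k * i_q * Real.sin δ + k / V * Qt = 0)) :
    ((∃ z : ℝ × ℝ × ℝ × ℝ × ℝ, eqm z) →
      4 * R ^ 2 * Qt ^ 2 ≤ V ^ 4 + 4 * R * V ^ 2 * Tt * ωg) ∧
    (∀ i_d i_q ω δ i_f : ℝ, eqm (i_d, i_q, ω, δ, i_f) →
      ω = ωg ∧
      -(m * i_f * i_q) = Tt ∧
      V * (i_q * Real.sin δ - i_d * Real.cos δ) = Qt ∧
      Tt * ωg = -V * (i_d * Real.sin δ + i_q * Real.cos δ)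
        + R * ((-V * (i_d * Real.sin δ + i_q * Real.cos δ)) ^ 2 + Qt ^ 2) / V ^ 2) := by
  have hk0 : k ≠ 0 := by rw [hk]; positivity
  have equilibrium : ∀ i_d i_q ω δ i_f : ℝ, eqm (i_d, i_q, ω, δ, i_f) →
      ω = ωg ∧ -(m * i_f * i_q) = Tt ∧ reactivePower V i_d i_q δ = Qt ∧
      Tt * ωg = activePower V i_d i_q δ + R * (activePower V i_d i_q δ ^ 2 + Qt ^ 2) / V ^ 2 := by
    intro i_d i_q ω δ i_f hz
    obtain ⟨hd, hq, hmech, hω, hfield⟩ := (heqm i_d i_q ω δ i_f).1 hz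
    obtain rfl : ω = ωg := sub_eq_zero.mp hω
    have hT : -(m * i_f * i_q) = Tt := by rw [hTt]; linear_combination -hmech
    have hQ := reactivePower_eq_of_field_eqn hV.ne' hk0 hfield
    refine ⟨rfl, hT, hQ, ?_⟩
    rw [← hQ]
    refine eq_add_div_of_power_balance hV.ne' ?_ (activePower_sq_add_reactivePower_sq ..)
    rw [activePower_eq_of_current_eqns hd hq, hT]
  refine ⟨?_, equilibrium⟩
  rintro ⟨⟨i_d, i_q, ω, δ, i_f⟩, hz⟩
  have balance := (equilibrium i_d i_q ω δ i_f hz).2.2.2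
  linarith [four_mul_sq_le_of_eq_add_div hV.ne' balance]

/-- (i) If the fifth-order non-saturated model has an equilibrium point, then
`4R²·Q̃² ≤ V⁴ + 4R·V²·T̃m·ωg`. (ii) At every equilibrium point `(i_d, i_q, ω, δ, i_f)`:
`ω = ωg`, `−m·i_f·i_q = T̃m`, the reactive power satisfies `Q = Q̃`, and the active power `P`
satisfies `T̃m·ωg = P + R·(P² + Q̃²)/V²`. -/
theorem stmt_15
    (R L J m Dp Dq V ωg ωn vset K Tm Qset : ℝ)
    (hR : 0 < R) (hL : 0 < L) (hJ : 0 < J) (hm : 0 < m) (hDp : 0 < Dp) (hDq : 0 < Dq)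
    (hV : 0 < V) (hωg : 0 < ωg) (hωn : 0 < ωn) (hvset : 0 < vset) (hK : 0 < K)
    (Tt Qt k : ℝ)
    (hTt : Tt = Tm + Dp * (ωn - ωg))
    (hQt : Qt = Qset + Dq * (vset - Real.sqrt (2 / 3) * V))
    (hk : k = Real.sqrt (3 / 2) * V / K)
    (eqm : ℝ × ℝ × ℝ × ℝ × ℝ → Prop)
    (heqm : ∀ i_d i_q ω δ i_f : ℝ, eqm (i_d, i_q, ω, δ, i_f) ↔
      (-R * i_d + ω * L * i_q + V * Real.sin δ = 0 ∧
       -(ω * L * i_d) - R * i_q - m * i_f * ω + V * Real.cos δ = 0 ∧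
       Tm + m * i_f * i_q - Dp * ω + Dp * ωn = 0 ∧
       ω - ωg = 0 ∧
       k * i_d * Real.cos δ - k * i_q * Real.sin δ + k / V * Qt = 0)) :
    ((∃ z : ℝ × ℝ × ℝ × ℝ × ℝ, eqm z) →
      4 * R ^ 2 * Qt ^ 2 ≤ V ^ 4 + 4 * R * V ^ 2 * Tt * ωg) ∧
    (∀ i_d i_q ω δ i_f : ℝ, eqm (i_d, i_q, ω, δ, i_f) →
      ω = ωg ∧
      -(m * i_f * i_q) = Tt ∧
      V * (i_q * Real.sin δ - i_d * Real.cos δ) = Qt ∧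
      Tt * ωg = -V * (i_d * Real.sin δ + i_q * Real.cos δ)
        + R * ((-V * (i_d * Real.sin δ + i_q * Real.cos δ)) ^ 2 + Qt ^ 2) / V ^ 2) :=
  stmt_15_general R L m Dp V ωg ωn K Tm hV hK Tt Qt k hTt hk eqm heqm
end

section
/- If z = (i_d, i_q, ω, δ, i_f) is an equilibrium point of the fifth-order non-saturated model, then z̃ = (−i_d, −i_q, ω, δ + π, −i_f) is also an equilibrium point, and the active power and the reactive power at z̃ are equal to those at z. -/
open Real

theorem stmt_17_general
    (R L m Dp V ωg ωn Tm : ℝ)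
    (Qt k : ℝ)
    (i_d i_q ω δ i_f : ℝ)
    (he1 : -R * i_d + ω * L * i_q + V * Real.sin δ = 0)
    (he2 : -(ω * L * i_d) - R * i_q - m * i_f * ω + V * Real.cos δ = 0)
    (he3 : Tm + m * i_f * i_q - Dp * ω + Dp * ωn = 0)
    (he4 : ω - ωg = 0)
    (he5 : k * i_d * Real.cos δ - k * i_q * Real.sin δ + k / V * Qt = 0) :
    (-R * -i_d + ω * L * -i_q + V * Real.sin (δ + π) = 0 ∧
     -(ω * L * -i_d) - R * -i_q - m * -i_f * ω + V * Real.cos (δ + π) = 0 ∧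
     Tm + m * -i_f * -i_q - Dp * ω + Dp * ωn = 0 ∧
     ω - ωg = 0 ∧
     k * -i_d * Real.cos (δ + π) - k * -i_q * Real.sin (δ + π) + k / V * Qt = 0) ∧
    -V * (-i_d * Real.sin (δ + π) + -i_q * Real.cos (δ + π))
      = -V * (i_d * Real.sin δ + i_q * Real.cos δ) ∧
    V * (-i_q * Real.sin (δ + π) - -i_d * Real.cos (δ + π))
      = V * (i_q * Real.sin δ - i_d * Real.cos δ) := by
  simp only [Real.sin_add_pi, Real.cos_add_pi]
  refine ⟨⟨by linarith, by linarith, by linarith, he4, by linarith⟩, by ring, by ring⟩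

/-- If `z = (i_d, i_q, ω, δ, i_f)` is an equilibrium point of the fifth-order
non-saturated model, then `z̃ = (−i_d, −i_q, ω, δ + π, −i_f)` is also an equilibrium point,
and the active and reactive powers at `z̃` equal those at `z`. -/
theorem stmt_17
    (R L J m Dp Dq V ωg ωn vset K Tm Qset : ℝ)
    (hR : 0 < R) (hL : 0 < L) (hJ : 0 < J) (hm : 0 < m) (hDp : 0 < Dp) (hDq : 0 < Dq)
    (hV : 0 < V) (hωg : 0 < ωg) (hωn : 0 < ωn) (hvset : 0 < vset) (hK : 0 < K)
    (Tt Qt k : ℝ)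
    (hTt : Tt = Tm + Dp * (ωn - ωg))
    (hQt : Qt = Qset + Dq * (vset - Real.sqrt (2 / 3) * V))
    (hk : k = Real.sqrt (3 / 2) * V / K)
    (i_d i_q ω δ i_f : ℝ)
    (he1 : -R * i_d + ω * L * i_q + V * Real.sin δ = 0)
    (he2 : -(ω * L * i_d) - R * i_q - m * i_f * ω + V * Real.cos δ = 0)
    (he3 : Tm + m * i_f * i_q - Dp * ω + Dp * ωn = 0)
    (he4 : ω - ωg = 0)
    (he5 : k * i_d * Real.cos δ - k * i_q * Real.sin δ + k / V * Qt = 0) :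
    (-R * -i_d + ω * L * -i_q + V * Real.sin (δ + π) = 0 ∧
     -(ω * L * -i_d) - R * -i_q - m * -i_f * ω + V * Real.cos (δ + π) = 0 ∧
     Tm + m * -i_f * -i_q - Dp * ω + Dp * ωn = 0 ∧
     ω - ωg = 0 ∧
     k * -i_d * Real.cos (δ + π) - k * -i_q * Real.sin (δ + π) + k / V * Qt = 0) ∧
    -V * (-i_d * Real.sin (δ + π) + -i_q * Real.cos (δ + π))
      = -V * (i_d * Real.sin δ + i_q * Real.cos δ) ∧
    V * (-i_q * Real.sin (δ + π) - -i_d * Real.cos (δ + π))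
      = V * (i_q * Real.sin δ - i_d * Real.cos δ) :=
  stmt_17_general R L m Dp V ωg ωn Tm Qt k i_d i_q ω δ i_f he1 he2 he3 he4 he5
end

section
/- Assume T̃_m = 0 and Q̃ = −V²·ω_g·L/(R² + ω_g²·L²), and set P_M = −V²·R/(R² + ω_g²·L²). Then for every δ ∈ ℝ, the point (i_d, i_q, ω_g, δ, 0) with i_q = −(cos δ·P_M − sin δ·Q̃)/V and i_d = −(sin δ·P_M + cos δ·Q̃)/V is an equilibrium point of the fifth-order non-saturated model; in particular the model then has infinitely many equilibrium points, all with field current i_f = 0. -/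
/-!
At `ω = ωg` and `i_f = 0` the equilibrium equations are linear in `(i_d, i_q)`. The proposed
currents are the rotation by `δ` of `-(P_M, Q̃)/V`, so the reactive-power equation holds for any
`P_M` by `sin² δ + cos² δ = 1`, while the two stator equations reduce, uniformly in `δ`, to the
power-flow relations `R P_M + X Q̃ = -V²` and `R Q̃ = X P_M` for the line reactance `X = ωg L`.
Since `δ` is free, the equilibria form an injectively parametrised curve.
-/

open Real

section PowerFlow

variable {R X V P Q : ℝ}

lemma powerFlow_of_eq (hRX : R ^ 2 + X ^ 2 ≠ 0)
    (hP : P = -(V ^ 2 * R / (R ^ 2 + X ^ 2))) (hQ : Q = -(V ^ 2 * X / (R ^ 2 + X ^ 2))) :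
    R * P + X * Q = -V ^ 2 ∧ R * Q = X * P := by
  subst hP hQ
  constructor
  · field_simp
    ring
  · ring

variable (δ : ℝ)

lemma stator_d_eq_zero_of_powerFlow (hV : V ≠ 0) (hreal : R * P + X * Q = -V ^ 2)
    (hreac : R * Q = X * P) :
    -R * -((sin δ * P + cos δ * Q) / V) + X * -((cos δ * P - sin δ * Q) / V) + V * sin δ = 0 := by
  field_simp
  linear_combination sin δ * hreal + cos δ * hreac

lemma stator_q_eq_zero_of_powerFlow (hV : V ≠ 0) (hreal : R * P + X * Q = -V ^ 2)
    (hreac : R * Q = X * P) :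
    -(X * -((sin δ * P + cos δ * Q) / V)) - R * -((cos δ * P - sin δ * Q) / V)
      + V * cos δ = 0 := by
  field_simp
  linear_combination cos δ * hreal - sin δ * hreac

lemma rotated_current_projection (hV : V ≠ 0) :
    -((sin δ * P + cos δ * Q) / V) * cos δ - -((cos δ * P - sin δ * Q) / V) * sin δ = -(Q / V) := by
  field_simp
  linear_combination -Q * sin_sq_add_cos_sq δ

end PowerFlow

theorem stmt_18_general
    (R L m Dp V ωg ωn Tm : ℝ)
    (hR : 0 < R)
    (hV : 0 < V)
    (Tt Qt k : ℝ)
    (hTt : Tt = Tm + Dp * (ωn - ωg))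
    (eqm : ℝ × ℝ × ℝ × ℝ × ℝ → Prop)
    (heqm : ∀ i_d i_q ω δ i_f : ℝ, eqm (i_d, i_q, ω, δ, i_f) ↔
      (-R * i_d + ω * L * i_q + V * Real.sin δ = 0 ∧
       -(ω * L * i_d) - R * i_q - m * i_f * ω + V * Real.cos δ = 0 ∧
       Tm + m * i_f * i_q - Dp * ω + Dp * ωn = 0 ∧
       ω - ωg = 0 ∧
       k * i_d * Real.cos δ - k * i_q * Real.sin δ + k / V * Qt = 0))
    (hTt0 : Tt = 0)
    (hQtval : Qt = -(V ^ 2 * ωg * L / (R ^ 2 + ωg ^ 2 * L ^ 2)))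
    (PM : ℝ) (hPM : PM = -(V ^ 2 * R / (R ^ 2 + ωg ^ 2 * L ^ 2))) :
    (∀ δ : ℝ, eqm
      (-((Real.sin δ * PM + Real.cos δ * Qt) / V),
       -((Real.cos δ * PM - Real.sin δ * Qt) / V), ωg, δ, 0)) ∧
    {z : ℝ × ℝ × ℝ × ℝ × ℝ | eqm z ∧ z.2.2.2.2 = 0}.Infinite := by
  have hV0 : V ≠ 0 := hV.ne'
  obtain ⟨hreal, hreac⟩ := powerFlow_of_eq (X := ωg * L) (V := V) (P := PM) (Q := Qt)
    (by positivity)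
    (by rw [hPM, mul_pow]) (by rw [hQtval, mul_pow, mul_assoc])
  have hequil : ∀ δ : ℝ, eqm
      (-((sin δ * PM + cos δ * Qt) / V), -((cos δ * PM - sin δ * Qt) / V), ωg, δ, 0) := by
    intro δ
    rw [heqm]
    refine ⟨stator_d_eq_zero_of_powerFlow δ hV0 hreal hreac, ?_, ?_, sub_self ωg, ?_⟩
    · simpa using stator_q_eq_zero_of_powerFlow δ hV0 hreal hreac
    · linarith
    · rw [mul_assoc k, mul_assoc k, ← mul_sub, rotated_current_projection δ hV0]
      ring
  refine ⟨hequil, Set.infinite_of_injective_forall_mem (f := fun δ : ℝ =>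
    (-((sin δ * PM + cos δ * Qt) / V), -((cos δ * PM - sin δ * Qt) / V), ωg, δ, (0 : ℝ)))
    (fun a b hab => congrArg (fun z : ℝ × ℝ × ℝ × ℝ × ℝ => z.2.2.2.1) hab)
    (fun δ => ⟨hequil δ, rfl⟩)⟩

/-- Assume `T̃m = 0` and `Q̃ = −V²·ωg·L/(R² + ωg²·L²)`, and set
`P_M = −V²·R/(R² + ωg²·L²)`. Then for every `δ ∈ ℝ`, the point `(i_d, i_q, ωg, δ, 0)` with
`i_q = −(cos δ·P_M − sin δ·Q̃)/V` and `i_d = −(sin δ·P_M + cos δ·Q̃)/V` is an equilibrium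
point of the fifth-order non-saturated model; in particular the model then has infinitely
many equilibrium points, all with field current `i_f = 0`. -/
theorem stmt_18
    (R L J m Dp Dq V ωg ωn vset K Tm Qset : ℝ)
    (hR : 0 < R) (hL : 0 < L) (hJ : 0 < J) (hm : 0 < m) (hDp : 0 < Dp) (hDq : 0 < Dq)
    (hV : 0 < V) (hωg : 0 < ωg) (hωn : 0 < ωn) (hvset : 0 < vset) (hK : 0 < K)
    (Tt Qt k : ℝ)
    (hTt : Tt = Tm + Dp * (ωn - ωg))
    (hQt : Qt = Qset + Dq * (vset - Real.sqrt (2 / 3) * V))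
    (hk : k = Real.sqrt (3 / 2) * V / K)
    (eqm : ℝ × ℝ × ℝ × ℝ × ℝ → Prop)
    (heqm : ∀ i_d i_q ω δ i_f : ℝ, eqm (i_d, i_q, ω, δ, i_f) ↔
      (-R * i_d + ω * L * i_q + V * Real.sin δ = 0 ∧
       -(ω * L * i_d) - R * i_q - m * i_f * ω + V * Real.cos δ = 0 ∧
       Tm + m * i_f * i_q - Dp * ω + Dp * ωn = 0 ∧
       ω - ωg = 0 ∧
       k * i_d * Real.cos δ - k * i_q * Real.sin δ + k / V * Qt = 0))
    (hTt0 : Tt = 0)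
    (hQtval : Qt = -(V ^ 2 * ωg * L / (R ^ 2 + ωg ^ 2 * L ^ 2)))
    (PM : ℝ) (hPM : PM = -(V ^ 2 * R / (R ^ 2 + ωg ^ 2 * L ^ 2))) :
    (∀ δ : ℝ, eqm
      (-((Real.sin δ * PM + Real.cos δ * Qt) / V),
       -((Real.cos δ * PM - Real.sin δ * Qt) / V), ωg, δ, 0)) ∧
    {z : ℝ × ℝ × ℝ × ℝ × ℝ | eqm z ∧ z.2.2.2.2 = 0}.Infinite :=
  stmt_18_general R L m Dp V ωg ωn Tm hR hV Tt Qt k hTt eqm heqm hTt0 hQtval PM hPM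
end
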